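/- arXiv:1707.06726 — 13 statements merged into one kernel-verified Lean document; each statement's English description precedes it below -/
import Mathlib

section
/- Let n be a positive integer, let λ_1,…,λ_n be positive reals and let τ > 0. Then exactly one of the following two alternatives holds: (i) for every a > 0 there is no real z with (z+λ_1)(z+λ_2)⋯(z+λ_n) + a·e^{−τz} = 0; or (ii) there exists a_0 > 0 such that for every a with 0 < a ≤ a_0 there exists a real (necessarily negative) z with (z+λ_1)⋯(z+λ_n) + a·e^{−τz} = 0, while for every a > a_0 no real z satisfies this equation. -/
open Filter Topology

private lemma factor_tendsto (c μ : ℝ) (hc : 0 < c) :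
    Tendsto (fun z : ℝ => (z + μ) * Real.exp (c * z)) atBot (𝓝 0) := by
  have hcy : Tendsto (fun y : ℝ => c * y) atTop atTop :=
    Tendsto.const_mul_atTop hc tendsto_id
  have h1 : Tendsto (fun y : ℝ => (c * y) ^ 1 * Real.exp (-(c * y))) atTop (𝓝 0) :=
    (Real.tendsto_pow_mul_exp_neg_atTop_nhds_zero 1).comp hcy
  have h1' : Tendsto (fun y : ℝ => y * Real.exp (-(c * y))) atTop (𝓝 0) := by
    have := h1.const_mul (1 / c)
    rw [mul_zero] at this
    refine this.congr fun y => ?_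
    field_simp
  have h2 : Tendsto (fun y : ℝ => Real.exp (-(c * y))) atTop (𝓝 0) :=
    Real.tendsto_exp_atBot.comp (tendsto_neg_atTop_atBot.comp hcy)
  have hF : Tendsto (fun y : ℝ => (μ - y) * Real.exp (-(c * y))) atTop (𝓝 0) := by
    have := (h2.const_mul μ).sub h1'
    rw [mul_zero, sub_zero] at this
    refine this.congr fun y => ?_
    ring
  have := hF.comp tendsto_neg_atBot_atTop
  simpa only [Function.comp_def, mul_neg, neg_neg, sub_neg_eq_add, add_comm] using this

/-- Lemma 1 (Braverman–Hasik–Ivanov–Trofimchuk): for the characteristic equation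
`(z+λ₁)⋯(z+λₙ) + a e^{-τz} = 0` with positive `λⱼ` and `τ > 0`, exactly one of the
following holds: (i) for every `a > 0` there is no real root; (ii) there is `a₀ > 0`
such that for `0 < a ≤ a₀` there is a negative real root, while for `a > a₀` there
is no real root. -/
theorem characteristic_real_roots_dichotomy
    (n : ℕ) (hn : 0 < n) (lam : Fin n → ℝ) (hlam : ∀ j, 0 < lam j)
    (τ : ℝ) (hτ : 0 < τ) :
    Xor'
      (∀ a : ℝ, 0 < a → ∀ z : ℝ,
        (∏ j, (z + lam j)) + a * Real.exp (-τ * z) ≠ 0)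
      (∃ a₀ : ℝ, 0 < a₀ ∧
        (∀ a : ℝ, 0 < a → a ≤ a₀ → ∃ z : ℝ, z < 0 ∧
          (∏ j, (z + lam j)) + a * Real.exp (-τ * z) = 0) ∧
        (∀ a : ℝ, a₀ < a → ∀ z : ℝ,
          (∏ j, (z + lam j)) + a * Real.exp (-τ * z) ≠ 0)) := by
  set P : ℝ → ℝ := fun z => ∏ j, (z + lam j) with hP
  set g : ℝ → ℝ := fun z => -P z * Real.exp (τ * z) with hg
  -- root characterization
  have hroot : ∀ a z : ℝ, (P z + a * Real.exp (-τ * z) = 0) ↔ a = g z := by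
    intro a z
    have hE : Real.exp (τ * z) ≠ 0 := (Real.exp_pos _).ne'
    rw [show (-τ * z) = -(τ * z) by ring, Real.exp_neg, hg]
    field_simp
    constructor <;> intro h <;> nlinarith [h]
  -- positivity of P for nonneg z
  have hPpos : ∀ z : ℝ, 0 ≤ z → 0 < P z := by
    intro z hz
    exact Finset.prod_pos fun j _ => by have := hlam j; linarith
  have hgneg : ∀ z : ℝ, 0 ≤ z → g z < 0 := by
    intro z hz
    have := hPpos z hz
    have := Real.exp_pos (τ * z)
    rw [hg]; dsimp only; nlinarith
  -- if g z > 0 then z < 0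
  have hzneg : ∀ z : ℝ, 0 < g z → z < 0 := by
    intro z hgz
    by_contra h
    exact absurd (hgneg z (not_lt.mp h)) (by linarith)
  -- continuity
  have hgc : Continuous g := by
    apply Continuous.mul
    · exact (continuous_finset_prod _ fun j _ => by continuity).neg
    · exact Real.continuous_exp.comp (continuous_const.mul continuous_id)
  -- limit at -infty
  have hg0 : Tendsto g atBot (𝓝 0) := by
    have hfac : ∀ j : Fin n, Tendsto (fun z : ℝ => (z + lam j) * Real.exp (τ / n * z))
        atBot (𝓝 0) := fun j => factor_tendsto (τ / n) (lam j)
        (div_pos hτ (Nat.cast_pos.mpr hn))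
    have hprod : Tendsto (fun z : ℝ => ∏ j, ((z + lam j) * Real.exp (τ / n * z)))
        atBot (𝓝 (∏ _j : Fin n, (0 : ℝ))) :=
      tendsto_finset_prod _ fun j _ => hfac j
    rw [Finset.prod_const, zero_pow (by simpa using hn.ne')] at hprod
    have heq : ∀ z : ℝ, g z = -(∏ j, ((z + lam j) * Real.exp (τ / n * z))) := by
      intro z
      rw [hg, hP, Finset.prod_mul_distrib, Finset.prod_const, ← Real.exp_nat_mul]
      have hn' : (n : ℝ) ≠ 0 := Nat.cast_ne_zero.mpr hn.ne'
      simp only [Finset.card_univ, Fintype.card_fin]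
      rw [show (n : ℝ) * (τ / n * z) = τ * z by field_simp]
      ring
    have := hprod.neg
    rw [neg_zero] at this
    exact this.congr fun z => (heq z).symm
  by_cases hpos : ∃ z₁ : ℝ, 0 < g z₁
  · -- alternative (ii)
    obtain ⟨z₁, hz₁⟩ := hpos
    have hz₁neg : z₁ < 0 := hzneg z₁ hz₁
    obtain ⟨R₀, hR₀⟩ := eventually_atBot.mp (hg0.eventually_lt_const hz₁)
    set R : ℝ := min R₀ z₁ with hR
    have hRz₁ : R ≤ z₁ := min_le_right _ _
    have hR0 : R ≤ 0 := le_trans hRz₁ hz₁neg.le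
    obtain ⟨zs, hzsmem, hzsmax⟩ :=
      isCompact_Icc.exists_isMaxOn (Set.nonempty_Icc.mpr hR0) hgc.continuousOn
        (s := Set.Icc R 0)
    set a₀ : ℝ := g zs with ha₀
    have hz₁mem : z₁ ∈ Set.Icc R 0 := ⟨hRz₁, hz₁neg.le⟩
    have ha₀ge : g z₁ ≤ a₀ := hzsmax hz₁mem
    have ha₀pos : 0 < a₀ := lt_of_lt_of_le hz₁ ha₀ge
    -- global max
    have hglobal : ∀ z : ℝ, g z ≤ a₀ := by
      intro z
      rcases le_or_gt z 0 with hz0 | hz0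
      · rcases le_or_gt R z with hRz | hRz
        · exact hzsmax ⟨hRz, hz0⟩
        · have : g z < g z₁ := hR₀ z (le_trans hRz.le (min_le_left _ _))
          linarith
      · have := hgneg z hz0.le
        linarith
    have hexroot : ∀ a : ℝ, 0 < a → a ≤ a₀ → ∃ z : ℝ, z < 0 ∧
        P z + a * Real.exp (-τ * z) = 0 := by
      intro a ha haa₀
      obtain ⟨R₁, hR₁⟩ := eventually_atBot.mp (hg0.eventually_lt_const ha)
      set zl : ℝ := min R₁ (zs - 1) with hzl
      have hzlzs : zl ≤ zs := le_trans (min_le_right _ _) (by linarith)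
      have hgzl : g zl < a := hR₁ zl (min_le_left _ _)
      have hmem : a ∈ Set.Icc (g zl) (g zs) := ⟨hgzl.le, haa₀⟩
      obtain ⟨z, _, hz⟩ := intermediate_value_Icc hzlzs hgc.continuousOn hmem
      refine ⟨z, hzneg z (by rw [hz]; exact ha), ?_⟩
      rw [hroot]; exact hz.symm
    right
    refine ⟨⟨a₀, ha₀pos, hexroot, ?_⟩, ?_⟩
    · intro a ha z hz
      rw [hroot] at hz
      have := hglobal z
      linarith
    · intro hcon
      obtain ⟨z, _, hz⟩ := hexroot a₀ ha₀pos le_rfl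
      exact hcon a₀ ha₀pos z hz
  · -- alternative (i)
    push_neg at hpos
    left
    constructor
    · intro a ha z hz
      rw [hroot] at hz
      have := hpos z
      linarith
    · rintro ⟨a₀, ha₀, hex, _⟩
      obtain ⟨z, _, hz⟩ := hex a₀ ha₀ le_rfl
      rw [hroot] at hz
      have := hpos z
      linarith
end

section
/- Let n be a positive integer, let λ_1,…,λ_n be real numbers, and let τ and a be nonzero reals. If z = α + βi with β ≠ 0 is a complex root of the characteristic equation (z+λ_1)(z+λ_2)⋯(z+λ_n) + a·e^{−τz} = 0, then z is a simple root: the derivative of the function χ(z) = (z+λ_1)⋯(z+λ_n) + a·e^{−τz} does not vanish at z. -/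
open Complex

/-!
At a root, `a e^{-τz} = -P(z)` with `P(z) = ∏ (z + λⱼ)`, so `χ'(z) = P'(z) + τ P(z)
= P(z) (∑ⱼ (z + λⱼ)⁻¹ + τ)`. If `Im z ≠ 0` no factor of `P(z)` vanishes, and every
`(z + λⱼ)⁻¹` has imaginary part of sign opposite to `Im z`; hence the sum is not real
and cannot equal the real number `-τ`.
-/

theorem deriv_prod_add_const {𝕜 ι : Type*} [NontriviallyNormedField 𝕜] (s : Finset ι)
    (c : ι → 𝕜) {x : 𝕜} (hx : ∀ i ∈ s, x + c i ≠ 0) :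
    deriv (fun w => ∏ i ∈ s, (w + c i)) x =
      (∏ i ∈ s, (x + c i)) * ∑ i ∈ s, (x + c i)⁻¹ := by
  have hlog := logDeriv_prod (f := fun i w => w + c i) hx fun _ _ => by fun_prop
  rw [logDeriv_apply, div_eq_iff (Finset.prod_ne_zero_iff.mpr hx)] at hlog
  rw [hlog, mul_comm]
  congr 1
  refine Finset.sum_congr rfl fun i _ => ?_
  simp [logDeriv_apply]

theorem deriv_add_mul_exp_of_eq_zero {f : ℂ → ℂ} {z : ℂ} (hf : DifferentiableAt ℂ f z)
    (a τ : ℂ) (hroot : f z + a * exp (-τ * z) = 0) :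
    deriv (fun w => f w + a * exp (-τ * w)) z = deriv f z + τ * f z := by
  have hexp : HasDerivAt (fun w => a * exp (-τ * w)) (a * (exp (-τ * z) * -τ)) z :=
    (((hasDerivAt_id z).const_mul (-τ)).cexp.congr_deriv (by simp)).const_mul a
  rw [(hf.hasDerivAt.fun_add hexp).deriv]
  linear_combination (-τ) * hroot

theorem im_sum_inv_add_ofReal_ne_zero {ι : Type*} {s : Finset ι} (hs : s.Nonempty)
    (c : ι → ℝ) {z : ℂ} (hz : z.im ≠ 0) : (∑ i ∈ s, (z + c i)⁻¹).im ≠ 0 := by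
  have hne : ∀ i, z + c i ≠ 0 := fun i h => hz (by simpa using congrArg im h)
  have hsum : (∑ i ∈ s, (z + c i)⁻¹).im = -z.im * ∑ i ∈ s, (normSq (z + c i))⁻¹ := by
    simp only [im_sum, inv_im, add_im, ofReal_im, add_zero, Finset.mul_sum, div_eq_mul_inv]
  have hpos : 0 < ∑ i ∈ s, (normSq (z + c i))⁻¹ :=
    Finset.sum_pos (fun i _ => inv_pos.mpr (normSq_pos.mpr (hne i))) hs
  rw [hsum]
  exact mul_ne_zero (neg_ne_zero.mpr hz) hpos.ne'

theorem complex_root_simple_general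
    (n : ℕ) (hn : 0 < n) (lam : Fin n → ℝ)
    (τ a : ℝ)
    (z : ℂ) (hz : z.im ≠ 0)
    (hroot : (∏ j, (z + (lam j : ℂ))) + (a : ℂ) * Complex.exp (-(τ : ℂ) * z) = 0) :
    deriv (fun w : ℂ =>
      (∏ j, (w + (lam j : ℂ))) + (a : ℂ) * Complex.exp (-(τ : ℂ) * w)) z ≠ 0 := by
  have hfac : ∀ j ∈ Finset.univ, z + (lam j : ℂ) ≠ 0 :=
    fun j _ h => hz (by simpa using congrArg im h)
  have hsum := im_sum_inv_add_ofReal_ne_zero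
    (Finset.univ_nonempty_iff.mpr (Fin.pos_iff_nonempty.mp hn)) lam hz
  rw [deriv_add_mul_exp_of_eq_zero (by fun_prop) _ _ hroot, deriv_prod_add_const _ _ hfac,
    mul_comm (τ : ℂ), ← mul_add]
  refine mul_ne_zero (Finset.prod_ne_zero_iff.mpr hfac) fun h => hsum ?_
  simpa using congrArg im h

/-- Lemma 2: every complex (non-real) root of the characteristic equation
`(z+λ₁)⋯(z+λₙ) + a e^{-τz} = 0` (with real `λⱼ`, nonzero real `τ, a`) is simple:
the derivative of `χ(z) = (z+λ₁)⋯(z+λₙ) + a e^{-τz}` does not vanish there. -/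
theorem complex_root_simple
    (n : ℕ) (hn : 0 < n) (lam : Fin n → ℝ)
    (τ a : ℝ) (hτ : τ ≠ 0) (ha : a ≠ 0)
    (z : ℂ) (hz : z.im ≠ 0)
    (hroot : (∏ j, (z + (lam j : ℂ))) + (a : ℂ) * Complex.exp (-(τ : ℂ) * z) = 0) :
    deriv (fun w : ℂ =>
      (∏ j, (w + (lam j : ℂ))) + (a : ℂ) * Complex.exp (-(τ : ℂ) * w)) z ≠ 0 :=
  complex_root_simple_general n hn lam τ a z hz hroot
end

section
/- Let n be a positive integer, λ_1,…,λ_n positive reals, τ > 0, and define Θ_0(ω) = Σ_{j=1}^{n} arctan(ω/λ_j) for ω ≥ 0. Then for every integer k ≥ 1 there exists a unique ω_k > 0 satisfying Θ_0(ω_k) = (2k−1)π − ω_k·τ; moreover the sequence (ω_k) is strictly increasing, 0 < ω_1 < ω_2 < ω_3 < ⋯, and ω_k → ∞ as k → ∞. -/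
open Real Filter

/-- For `Θ₀(ω) = Σⱼ arctan(ω/λⱼ)` with positive `λⱼ` and `τ > 0`, for every `k ≥ 1`
there is a unique `ω_k > 0` with `Θ₀(ω_k) = (2k-1)π - ω_k τ`; the sequence `(ω_k)`
is strictly increasing and tends to infinity. -/
theorem omega_k_exists_unique_strictMono
    (n : ℕ) (hn : 0 < n) (lam : Fin n → ℝ) (hlam : ∀ j, 0 < lam j)
    (τ : ℝ) (hτ : 0 < τ) :
    ∃ ω : ℕ → ℝ,
      (∀ k : ℕ, 1 ≤ k →
        (0 < ω k ∧
          (∑ j, Real.arctan (ω k / lam j)) = (2 * (k : ℝ) - 1) * Real.pi - ω k * τ ∧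
          (∀ w : ℝ, 0 < w →
            (∑ j, Real.arctan (w / lam j)) = (2 * (k : ℝ) - 1) * Real.pi - w * τ →
            w = ω k))) ∧
      StrictMonoOn ω (Set.Ici 1) ∧
      Filter.Tendsto ω Filter.atTop Filter.atTop := by
  set f : ℝ → ℝ := fun x => (∑ j, Real.arctan (x / lam j)) + x * τ with hfdef
  have hmono : StrictMono f := by
    have hg : Monotone (fun x : ℝ => ∑ j, Real.arctan (x / lam j)) := by
      intro a b hab
      apply Finset.sum_le_sum
      intro j _
      exact Real.arctan_strictMono.monotone (by gcongr; exact (hlam j).le)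
    have hh : StrictMono (fun x : ℝ => x * τ) := fun a b h => by
      exact mul_lt_mul_of_pos_right h hτ
    exact hg.add_strictMono hh
  have hcont : Continuous f := by
    apply Continuous.add
    · exact continuous_finset_sum _ fun j _ =>
        Real.continuous_arctan.comp (continuous_id.div_const _)
    · exact continuous_id.mul continuous_const
  have hf0 : f 0 = 0 := by simp [hfdef]
  have hub : ∀ x : ℝ, f x ≤ x * τ + n * (Real.pi / 2) := by
    intro x
    have : (∑ j, Real.arctan (x / lam j)) ≤ ∑ _j : Fin n, Real.pi / 2 :=
      Finset.sum_le_sum fun j _ => (Real.arctan_lt_pi_div_two _).le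
    simp only [Finset.sum_const, Finset.card_univ, Fintype.card_fin, nsmul_eq_mul] at this
    simp only [hfdef]; linarith
  have hlb : ∀ x : ℝ, 0 ≤ x → x * τ ≤ f x := by
    intro x hx
    have : (0:ℝ) ≤ ∑ j, Real.arctan (x / lam j) :=
      Finset.sum_nonneg fun j _ => Real.arctan_zero ▸ Real.arctan_strictMono.monotone (div_nonneg hx (hlam j).le)
    simp only [hfdef]; linarith
  have hex : ∀ k : ℕ, 1 ≤ k → ∃ x : ℝ, 0 < x ∧ f x = (2 * (k : ℝ) - 1) * Real.pi := by
    intro k hk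
    set c : ℝ := (2 * (k : ℝ) - 1) * Real.pi with hc
    have hck : (1:ℝ) ≤ (k:ℝ) := by exact_mod_cast hk
    have hcpos : 0 < c := by
      have := Real.pi_pos; nlinarith
    set M : ℝ := c / τ with hM
    have hM0 : 0 ≤ M := le_of_lt (by positivity)
    have hfM : c ≤ f M := by
      have := hlb M hM0
      rw [hM, div_mul_cancel₀ _ hτ.ne'] at this
      exact this
    have : c ∈ Set.Icc (f 0) (f M) := ⟨by rw [hf0]; exact hcpos.le, hfM⟩
    obtain ⟨x, hx, hfx⟩ := intermediate_value_Icc hM0 hcont.continuousOn this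
    refine ⟨x, ?_, hfx⟩
    rcases lt_or_eq_of_le hx.1 with h | h
    · exact h
    · exfalso; rw [← h, hf0] at hfx; linarith
  classical
  set ω : ℕ → ℝ := fun k => if h : 1 ≤ k then (hex k h).choose else 0 with hω
  have hωspec : ∀ k (h : 1 ≤ k), 0 < ω k ∧ f (ω k) = (2 * (k : ℝ) - 1) * Real.pi := by
    intro k h
    simp only [hω, dif_pos h]
    exact (hex k h).choose_spec
  refine ⟨ω, ?_, ?_, ?_⟩
  · intro k hk
    obtain ⟨hpos, heq⟩ := hωspec k hk
    refine ⟨hpos, by simp only [hfdef] at heq; linarith, ?_⟩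
    intro w _ hw
    have : f w = f (ω k) := by
      have heq' := heq
      simp only [hfdef] at heq' ⊢
      linarith
    exact hmono.injective this
  · intro a ha b hb hab
    obtain ⟨_, hea⟩ := hωspec a ha
    obtain ⟨_, heb⟩ := hωspec b hb
    have : f (ω a) < f (ω b) := by
      rw [hea, heb]
      have : (a:ℝ) < (b:ℝ) := by exact_mod_cast hab
      have := Real.pi_pos
      nlinarith
    exact hmono.lt_iff_lt.mp this
  · have h0 : Tendsto (fun k : ℕ => 2 * Real.pi * (k:ℝ)) atTop atTop := by
      apply Filter.Tendsto.const_mul_atTop (by positivity : (0:ℝ) < 2 * Real.pi)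
      exact tendsto_natCast_atTop_atTop
    have h0' : Tendsto (fun k : ℕ => 2 * Real.pi * (k:ℝ) + -(Real.pi + (n:ℝ) * (Real.pi/2))) atTop atTop :=
      tendsto_atTop_add_const_right _ _ h0
    have h1 : Tendsto (fun k : ℕ => (2 * Real.pi * (k:ℝ) + -(Real.pi + (n:ℝ) * (Real.pi/2))) / τ) atTop atTop :=
      h0'.atTop_div_const hτ
    apply tendsto_atTop_mono' atTop _ h1
    filter_upwards [eventually_ge_atTop 1] with k hk
    obtain ⟨hpos, heq⟩ := hωspec k hk
    have h2 := hub (ω k)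
    rw [heq] at h2
    rw [div_le_iff₀ hτ]
    nlinarith [Real.pi_pos]
end

section
/- Let n be a positive integer, λ_1,…,λ_n positive reals, τ > 0. For each integer k ≥ 1 let ω_k > 0 be the unique solution of Σ_{j=1}^{n} arctan(ω/λ_j) = (2k−1)π − ωτ, and set a_k = √(Π_{j=1}^{n}(ω_k² + λ_j²)). Then: (1) for a > 0 and ω > 0, the number z = iω is a root of (z+λ_1)⋯(z+λ_n) + a·e^{−τz} = 0 if and only if ω = ω_k and a = a_k for some integer k ≥ 1; (2) the sequence (a_k) is strictly increasing with a_k → ∞ as k → ∞; in particular, for each fixed a = a_k the equation has exactly one pair of purely imaginary roots, namely z = ±i·ω_k. -/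
/-!
On the imaginary axis the product `∏ⱼ (iω + λⱼ)` has modulus `√∏ⱼ (ω² + λⱼ²)` and argument
`Σⱼ arctan (ω / λⱼ)`, while `a e^{-iωτ}` has modulus `a` and argument `-ωτ`. So `χ_a(iω) = 0`
exactly when the moduli agree and the arguments differ by an odd multiple of `π`; for `ω > 0`
the left side `Σⱼ arctan (ω / λⱼ) + ωτ` is positive, so the multiple is `(2k - 1)π` with
`k ≥ 1`. That left side is strictly increasing in `ω` and its arctan part is bounded by
`nπ/2`, hence `ω_k` increases to infinity, and so does `a_k`, an increasing function of `ω_k`.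
-/

open Complex Filter

section

variable {ι : Type*} [Fintype ι] {lam : ι → ℝ}

lemma Complex.ofReal_add_mul_I_eq_sqrt_mul_exp_arctan {l : ℝ} (hl : 0 < l) (w : ℝ) :
    (l : ℂ) + w * I = √(w ^ 2 + l ^ 2) * exp (Real.arctan (w / l) * I) := by
  have hs : √(1 + (w / l) ^ 2) = √(w ^ 2 + l ^ 2) / l := by
    rw [show 1 + (w / l) ^ 2 = (w ^ 2 + l ^ 2) / l ^ 2 by field_simp; ring,
      Real.sqrt_div' _ (by positivity), Real.sqrt_sq hl.le]
  apply Complex.ext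
  · simp only [add_re, ofReal_re, mul_re, I_re, I_im, ofReal_im, exp_ofReal_mul_I_re,
      exp_ofReal_mul_I_im, Real.cos_arctan, hs]
    field_simp
    ring
  · simp only [add_im, ofReal_re, mul_im, I_re, I_im, ofReal_im, exp_ofReal_mul_I_re,
      exp_ofReal_mul_I_im, Real.sin_arctan, hs]
    field_simp
    ring

lemma prod_I_mul_add_eq_sqrt_mul_exp_sum_arctan (hlam : ∀ j, 0 < lam j) (w : ℝ) :
    ∏ j, (I * w + lam j) =
      √(∏ j, (w ^ 2 + lam j ^ 2)) * exp ((∑ j, Real.arctan (w / lam j) : ℝ) * I) := by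
  rw [Real.sqrt_prod _ fun j _ => by positivity, ofReal_prod, ofReal_sum, Finset.sum_mul, exp_sum,
    ← Finset.prod_mul_distrib]
  refine Finset.prod_congr rfl fun j _ => ?_
  rw [← Complex.ofReal_add_mul_I_eq_sqrt_mul_exp_arctan (hlam j), add_comm, mul_comm]

lemma Complex.ofReal_mul_exp_add_ofReal_mul_exp_eq_zero_iff {r a : ℝ} (hr : 0 ≤ r) (ha : 0 < a)
    (θ φ : ℝ) :
    (r : ℂ) * exp (θ * I) + a * exp (φ * I) = 0 ↔
      r = a ∧ ∃ m : ℤ, θ - φ = (2 * m + 1) * Real.pi := by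
  have hshift : -exp (φ * I) = exp ((φ + Real.pi : ℝ) * I) := by
    rw [ofReal_add, add_mul, exp_add, exp_pi_mul_I]
    ring
  constructor
  · intro h
    have hra : r = a := by
      simpa [norm_exp_ofReal_mul_I, abs_of_nonneg hr, abs_of_pos ha] using
        congrArg norm (eq_neg_of_add_eq_zero_left h)
    subst hra
    have hsum : (r : ℂ) * (exp (θ * I) + exp (φ * I)) = 0 := by linear_combination h
    have hexp : exp (θ * I) = exp ((φ + Real.pi : ℝ) * I) := by
      rw [← hshift]
      linear_combination (mul_eq_zero.1 hsum).resolve_left (by exact_mod_cast ha.ne')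
    obtain ⟨m, hm⟩ := exp_eq_exp_iff_exists_int.1 hexp
    refine ⟨rfl, m, ?_⟩
    have := congrArg im hm
    simp only [mul_im, ofReal_re, I_im, mul_one, ofReal_im, I_re, mul_zero, add_zero, ofReal_add,
      add_im, add_re, intCast_re, mul_re, re_ofNat, im_ofNat, sub_zero, zero_mul, intCast_im,
      sub_self] at this
    linarith
  · rintro ⟨rfl, m, hm⟩
    have hexp : exp (θ * I) = exp ((φ + Real.pi : ℝ) * I) :=
      exp_eq_exp_iff_exists_int.2 ⟨m, by rw [eq_add_of_sub_eq' hm]; push_cast; ring⟩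
    rw [hexp, ← hshift]
    ring

lemma exists_int_eq_odd_mul_pi_iff {x : ℝ} (hx : 0 < x) :
    (∃ m : ℤ, x = (2 * m + 1) * Real.pi) ↔ ∃ k : ℕ, 1 ≤ k ∧ x = (2 * k - 1) * Real.pi := by
  constructor
  · rintro ⟨m, rfl⟩
    have hm : (-1 : ℤ) < m := by
      have := pos_of_mul_pos_left hx Real.pi_pos.le
      exact_mod_cast (by linarith : (-1 : ℝ) < m)
    lift m to ℕ using by omega
    exact ⟨m + 1, by omega, by push_cast; ring⟩
  · rintro ⟨k, hk, rfl⟩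
    exact ⟨k - 1, by push_cast; ring⟩

lemma sum_arctan_div_nonneg (hlam : ∀ j, 0 < lam j) {w : ℝ} (hw : 0 ≤ w) :
    0 ≤ ∑ j, Real.arctan (w / lam j) :=
  Finset.sum_nonneg fun j _ => Real.arctan_nonneg.2 (div_nonneg hw (hlam j).le)

lemma sum_arctan_le (f : ι → ℝ) :
    ∑ j, Real.arctan (f j) ≤ Fintype.card ι * (Real.pi / 2) := by
  simpa using Finset.sum_le_sum fun j (_ : j ∈ Finset.univ) => (Real.arctan_lt_pi_div_two (f j)).le

lemma strictMono_sum_arctan_div_add_mul (hlam : ∀ j, 0 < lam j) {τ : ℝ} (hτ : 0 < τ) :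
    StrictMono fun w => ∑ j, Real.arctan (w / lam j) + w * τ :=
  (Monotone.add_strictMono
    (fun _ _ hxy => Finset.sum_le_sum fun j _ =>
      Real.arctan_strictMono.monotone (div_le_div_of_nonneg_right hxy (hlam j).le))
    (strictMono_mul_right_of_pos hτ))

lemma strictMonoOn_sqrt_prod_sq_add_sq [Nonempty ι] (lam : ι → ℝ) :
    StrictMonoOn (fun w => √(∏ j, (w ^ 2 + lam j ^ 2))) (Set.Ioi 0) := by
  intro w (hw : 0 < w) v _ hwv
  exact Real.sqrt_lt_sqrt (by positivity) (Finset.prod_lt_prod_of_nonempty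
    (fun j _ => by positivity) (fun j _ => by gcongr) Finset.univ_nonempty)

lemma tendsto_sqrt_prod_sq_add_sq_atTop [Nonempty ι] (lam : ι → ℝ) :
    Tendsto (fun w => √(∏ j, (w ^ 2 + lam j ^ 2))) atTop atTop := by
  refine tendsto_atTop_mono' _ ?_ (tendsto_pow_atTop (Fintype.card_ne_zero (α := ι)))
  filter_upwards [eventually_ge_atTop 0] with w hw
  calc w ^ Fintype.card ι = √(∏ _j : ι, w ^ 2) := by
        rw [Finset.prod_const, Finset.card_univ, ← pow_mul, mul_comm, pow_mul,
          Real.sqrt_sq (by positivity)]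
    _ ≤ √(∏ j, (w ^ 2 + lam j ^ 2)) := Real.sqrt_le_sqrt
        (Finset.prod_le_prod (fun j _ => by positivity) fun j _ => by nlinarith [sq_nonneg (lam j)])

lemma strictMonoOn_of_sum_arctan_div_eq (hlam : ∀ j, 0 < lam j) {τ : ℝ} (hτ : 0 < τ)
    {ω : ℕ → ℝ}
    (hω : ∀ k, 1 ≤ k → ∑ j, Real.arctan (ω k / lam j) = (2 * (k : ℝ) - 1) * Real.pi - ω k * τ) :
    StrictMonoOn ω (Set.Ici 1) := by
  intro k hk l hl hkl
  apply (strictMono_sum_arctan_div_add_mul hlam hτ).lt_iff_lt.1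
  simp only [hω k hk, hω l hl, sub_add_cancel]
  gcongr

lemma tendsto_atTop_of_sum_arctan_div_eq {τ : ℝ} (hτ : 0 < τ) {ω : ℕ → ℝ}
    (hω : ∀ k, 1 ≤ k → ∑ j, Real.arctan (ω k / lam j) = (2 * (k : ℝ) - 1) * Real.pi - ω k * τ) :
    Tendsto ω atTop atTop := by
  have hlin : Tendsto
      (fun k : ℕ => (2 * Real.pi * k + -(Real.pi + Fintype.card ι * (Real.pi / 2))) / τ)
      atTop atTop :=
    (tendsto_atTop_add_const_right _ _
      (tendsto_natCast_atTop_atTop.const_mul_atTop Real.two_pi_pos)).atTop_div_const hτ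
  refine tendsto_atTop_mono' _ ?_ hlin
  filter_upwards [eventually_ge_atTop 1] with k hk
  rw [div_le_iff₀ hτ]
  linarith [hω k hk, sum_arctan_le fun j => ω k / lam j]

end

/-- Lemma 3 (i): with `ω_k` the unique positive solution of
`Σⱼ arctan(ω/λⱼ) = (2k-1)π - ωτ` and `a_k = √(Πⱼ(ω_k² + λⱼ²))`, the number `z = iω`
(`ω > 0`) is a root of `(z+λ₁)⋯(z+λₙ) + a e^{-τz} = 0` (`a > 0`) iff `ω = ω_k` and
`a = a_k` for some `k ≥ 1`; the sequence `(a_k)` is strictly increasing and tends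
to infinity. In particular, for `a = a_k` the only purely imaginary roots are
`±i ω_k`. -/
theorem purely_imaginary_roots
    (n : ℕ) (hn : 0 < n) (lam : Fin n → ℝ) (hlam : ∀ j, 0 < lam j)
    (τ : ℝ) (hτ : 0 < τ)
    (ω : ℕ → ℝ)
    (hω : ∀ k : ℕ, 1 ≤ k → 0 < ω k ∧
      (∑ j, Real.arctan (ω k / lam j)) = (2 * (k : ℝ) - 1) * Real.pi - ω k * τ)
    (hωuniq : ∀ k : ℕ, 1 ≤ k → ∀ w : ℝ, 0 < w →
      (∑ j, Real.arctan (w / lam j)) = (2 * (k : ℝ) - 1) * Real.pi - w * τ → w = ω k)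
    (A : ℕ → ℝ)
    (hA : ∀ k : ℕ, A k = Real.sqrt (∏ j, (ω k ^ 2 + lam j ^ 2))) :
    (∀ a : ℝ, 0 < a → ∀ w : ℝ, 0 < w →
      ((∏ j, (Complex.I * (w : ℂ) + (lam j : ℂ)))
          + (a : ℂ) * Complex.exp (-(τ : ℂ) * (Complex.I * (w : ℂ))) = 0
        ↔ ∃ k : ℕ, 1 ≤ k ∧ w = ω k ∧ a = A k)) ∧
    StrictMonoOn A (Set.Ici 1) ∧
    Filter.Tendsto A Filter.atTop Filter.atTop := by
  have : Nonempty (Fin n) := Fin.pos_iff_nonempty.1 hn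
  have hωeq k hk := (hω k hk).2
  have hA' : A = fun k => √(∏ j, (ω k ^ 2 + lam j ^ 2)) := funext hA
  refine ⟨fun a ha w hw => ?_, ?_, ?_⟩
  · have hphase : 0 < ∑ j, Real.arctan (w / lam j) + w * τ := by
      linarith [sum_arctan_div_nonneg hlam hw.le, mul_pos hw hτ]
    rw [prod_I_mul_add_eq_sqrt_mul_exp_sum_arctan hlam,
      show -(τ : ℂ) * (I * w) = ((-(w * τ) : ℝ) : ℂ) * I by push_cast; ring,
      Complex.ofReal_mul_exp_add_ofReal_mul_exp_eq_zero_iff (Real.sqrt_nonneg _) ha,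
      sub_neg_eq_add, exists_int_eq_odd_mul_pi_iff hphase]
    constructor
    · rintro ⟨hwa, k, hk, hwk⟩
      obtain rfl : w = ω k := hωuniq k hk w hw (by linarith)
      exact ⟨k, hk, rfl, by rw [hA, hwa]⟩
    · rintro ⟨k, hk, rfl, rfl⟩
      exact ⟨(hA k).symm, k, hk, by linarith [hωeq k hk]⟩
  · rw [hA']
    exact (strictMonoOn_sqrt_prod_sq_add_sq lam).comp
      (strictMonoOn_of_sum_arctan_div_eq hlam hτ hωeq) fun k hk => (hω k hk).1
  · rw [hA']
    exact (tendsto_sqrt_prod_sq_add_sq_atTop lam).comp (tendsto_atTop_of_sum_arctan_div_eq hτ hωeq)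
end

section
/- Let n be a positive integer, λ_1,…,λ_n positive reals, τ > 0 and a > 0. If z_1 = α + β_1·i and z_2 = α + β_2·i with the same real part α ∈ ℝ and with β_1, β_2 ≥ 0 are both roots of the characteristic equation (z+λ_1)(z+λ_2)⋯(z+λ_n) + a·e^{−τz} = 0, then β_1 = β_2. That is, every vertical half-line {α + βi : β ≥ 0} contains at most one root. -/
open Complex

/-- Claim 1 (vertical half-lines): for positive `λⱼ`, `τ > 0`, `a > 0`, two roots of
`(z+λ₁)⋯(z+λₙ) + a e^{-τz} = 0` of the form `α + β₁ i`, `α + β₂ i` with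
`β₁, β₂ ≥ 0` must coincide: `β₁ = β₂`. -/
theorem vertical_halfline_at_most_one_root
    (n : ℕ) (hn : 0 < n) (lam : Fin n → ℝ) (hlam : ∀ j, 0 < lam j)
    (τ a : ℝ) (hτ : 0 < τ) (ha : 0 < a)
    (α β₁ β₂ : ℝ) (hβ₁ : 0 ≤ β₁) (hβ₂ : 0 ≤ β₂)
    (h1 : (∏ j, (((α : ℂ) + (β₁ : ℂ) * Complex.I) + (lam j : ℂ)))
        + (a : ℂ) * Complex.exp (-(τ : ℂ) * ((α : ℂ) + (β₁ : ℂ) * Complex.I)) = 0)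
    (h2 : (∏ j, (((α : ℂ) + (β₂ : ℂ) * Complex.I) + (lam j : ℂ)))
        + (a : ℂ) * Complex.exp (-(τ : ℂ) * ((α : ℂ) + (β₂ : ℂ) * Complex.I)) = 0) :
    β₁ = β₂ := by
  set K := a ^ 2 * Real.exp (-(τ * α)) ^ 2 with hK
  have hKpos : 0 < K := by positivity
  have key : ∀ β : ℝ, ((∏ j, (((α : ℂ) + (β : ℂ) * Complex.I) + (lam j : ℂ)))
        + (a : ℂ) * Complex.exp (-(τ : ℂ) * ((α : ℂ) + (β : ℂ) * Complex.I)) = 0) →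
      ∏ j, ((α + lam j) ^ 2 + β ^ 2) = K := by
    intro β h
    have h' : (∏ j, (((α : ℂ) + (β : ℂ) * Complex.I) + (lam j : ℂ)))
        = -((a : ℂ) * Complex.exp (-(τ : ℂ) * ((α : ℂ) + (β : ℂ) * Complex.I))) := by
      linear_combination h
    have h2 := congrArg Complex.normSq h'
    rw [Complex.normSq_neg, map_mul, map_prod] at h2
    have hterm : ∀ j : Fin n,
        Complex.normSq (((α : ℂ) + (β : ℂ) * Complex.I) + (lam j : ℂ))
          = (α + lam j) ^ 2 + β ^ 2 := by
      intro j
      have : ((α : ℂ) + (β : ℂ) * Complex.I) + (lam j : ℂ)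
          = (((α + lam j : ℝ) : ℂ) + ((β : ℝ) : ℂ) * Complex.I) := by
        push_cast; ring
      rw [this, Complex.normSq_add_mul_I]
    have hexp : Complex.normSq (Complex.exp (-(τ : ℂ) * ((α : ℂ) + (β : ℂ) * Complex.I)))
        = Real.exp (-(τ * α)) ^ 2 := by
      rw [← Complex.sq_norm, Complex.norm_exp]
      congr 2
      simp [Complex.mul_re]
    rw [Finset.prod_congr rfl (fun j _ => hterm j), hexp, Complex.normSq_ofReal] at h2
    rw [h2, hK]; ring
  have e1 := key β₁ h1
  have e2 := key β₂ h2
  -- strict monotonicity in β ≥ 0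
  have mono : ∀ b c : ℝ, 0 ≤ b → b < c →
      (∏ j, ((α + lam j) ^ 2 + b ^ 2) = K) →
      (∏ j, ((α + lam j) ^ 2 + c ^ 2) = K) → False := by
    intro b c hb hbc eb ec
    have hpos : ∀ j : Fin n, 0 < (α + lam j) ^ 2 + b ^ 2 := by
      intro j
      rcases lt_or_eq_of_le (by positivity : (0:ℝ) ≤ (α + lam j) ^ 2 + b ^ 2) with h | h
      · exact h
      · exfalso
        have : (∏ j, ((α + lam j) ^ 2 + b ^ 2)) = 0 :=
          Finset.prod_eq_zero (Finset.mem_univ j) h.symm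
        rw [eb] at this; exact hKpos.ne' this
    have hlt : (∏ j, ((α + lam j) ^ 2 + b ^ 2)) < ∏ j, ((α + lam j) ^ 2 + c ^ 2) := by
      apply Finset.prod_lt_prod_of_nonempty
      · exact fun j _ => hpos j
      · intro j _
        have : b ^ 2 < c ^ 2 := by nlinarith
        linarith
      · exact Finset.univ_nonempty_iff.mpr ⟨⟨0, hn⟩⟩
    rw [eb, ec] at hlt; exact lt_irrefl _ hlt
  rcases lt_trichotomy β₁ β₂ with h | h | h
  · exact absurd (mono β₁ β₂ hβ₁ h e1 e2) (fun x => x)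
  · exact h
  · exact absurd (mono β₂ β₁ hβ₂ h e2 e1) (fun x => x)
end

section
/- Let n be a positive integer, λ_1,…,λ_n positive reals, τ > 0 and a > 0. If z_1 = α_1 + β·i and z_2 = α_2 + β·i with the same imaginary part β ∈ ℝ and with α_1, α_2 > 0 are both roots of the characteristic equation (z+λ_1)(z+λ_2)⋯(z+λ_n) + a·e^{−τz} = 0, then α_1 = α_2. That is, every horizontal half-line {α + βi : α > 0} contains at most one root. -/
open Complex

/-! Taking moduli in the characteristic equation at `z = α + βi` gives
`(∏ j, ‖z + λⱼ‖) * exp (τ α) = |a|`. Along a horizontal line the left side is strictly increasing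
in `α` wherever every `α + λⱼ` is positive, since each factor `‖(α + λⱼ) + βi‖` is nondecreasing
there and `exp (τ α)` is strictly increasing; so it takes the value `|a|` at most once. -/

theorem norm_prod_mul_exp_eq_of_add_mul_exp_eq_zero {ι : Type*} (s : Finset ι) (f : ι → ℂ)
    (a : ℂ) (τ : ℝ) (z : ℂ) (h : ∏ j ∈ s, f j + a * exp (-(τ : ℂ) * z) = 0) :
    (∏ j ∈ s, ‖f j‖) * Real.exp (τ * z.re) = ‖a‖ := by
  have hprod : ∏ j ∈ s, f j = -(a * exp (-(τ : ℂ) * z)) := eq_neg_of_add_eq_zero_left h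
  have hre : (-(τ : ℂ) * z).re = -(τ * z.re) := by simp
  rw [← norm_prod, hprod, norm_neg, norm_mul, norm_exp, hre, mul_assoc, ← Real.exp_add,
    neg_add_cancel, Real.exp_zero, mul_one]

theorem norm_add_mul_I_strictMonoOn (β : ℝ) :
    StrictMonoOn (fun x : ℝ => ‖(x : ℂ) + β * I‖) (Set.Ici 0) := by
  intro x hx y hy hxy
  simp only [norm_add_mul_I]
  exact Real.sqrt_lt_sqrt (by positivity) (by nlinarith [Set.mem_Ici.mp hx])

theorem prod_norm_mul_exp_strictMonoOn {ι : Type*} (s : Finset ι) (lam : ι → ℝ)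
    (hlam : ∀ j, 0 ≤ lam j) (τ β : ℝ) (hτ : 0 < τ) :
    StrictMonoOn (fun α : ℝ => (∏ j ∈ s, ‖(α : ℂ) + β * I + lam j‖) * Real.exp (τ * α))
      (Set.Ioi 0) := by
  have hfactor (α : ℝ) (j : ι) : (α : ℂ) + β * I + lam j = ((α + lam j : ℝ) : ℂ) + β * I := by
    push_cast; ring
  intro x hx y hy hxy
  have hx' (j : ι) : 0 < x + lam j := by linarith [hlam j, Set.mem_Ioi.mp hx]
  simp only [hfactor]
  have hpos : 0 < ∏ j ∈ s, ‖((x + lam j : ℝ) : ℂ) + β * I‖ :=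
    Finset.prod_pos fun j _ => (norm_nonneg ((0 : ℝ) + β * I)).trans_lt <|
      norm_add_mul_I_strictMonoOn β Set.self_mem_Ici (hx' j).le (hx' j)
  have hprod : ∏ j ∈ s, ‖((x + lam j : ℝ) : ℂ) + β * I‖
      ≤ ∏ j ∈ s, ‖((y + lam j : ℝ) : ℂ) + β * I‖ :=
    Finset.prod_le_prod (fun _ _ => norm_nonneg _) fun j _ =>
      (norm_add_mul_I_strictMonoOn β).monotoneOn (hx' j).le
        (show 0 ≤ y + lam j by linarith [hx' j]) (by linarith)
  have hexp : Real.exp (τ * x) < Real.exp (τ * y) := Real.exp_lt_exp.mpr (by nlinarith)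
  exact mul_lt_mul' hprod hexp (Real.exp_pos _).le (hpos.trans_le hprod)

theorem horizontal_halfline_at_most_one_root_general
    (n : ℕ) (lam : Fin n → ℝ) (hlam : ∀ j, 0 < lam j)
    (τ a : ℝ) (hτ : 0 < τ)
    (α₁ α₂ β : ℝ) (hα₁ : 0 < α₁) (hα₂ : 0 < α₂)
    (h1 : (∏ j, (((α₁ : ℂ) + (β : ℂ) * Complex.I) + (lam j : ℂ)))
        + (a : ℂ) * Complex.exp (-(τ : ℂ) * ((α₁ : ℂ) + (β : ℂ) * Complex.I)) = 0)
    (h2 : (∏ j, (((α₂ : ℂ) + (β : ℂ) * Complex.I) + (lam j : ℂ)))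
        + (a : ℂ) * Complex.exp (-(τ : ℂ) * ((α₂ : ℂ) + (β : ℂ) * Complex.I)) = 0) :
    α₁ = α₂ := by
  have e1 := norm_prod_mul_exp_eq_of_add_mul_exp_eq_zero _ _ _ _ _ h1
  have e2 := norm_prod_mul_exp_eq_of_add_mul_exp_eq_zero _ _ _ _ _ h2
  simp only [add_re, ofReal_re, mul_re, I_re, I_im, ofReal_im, mul_zero, mul_one, sub_zero,
    add_zero] at e1 e2
  exact (prod_norm_mul_exp_strictMonoOn Finset.univ lam (fun j => (hlam j).le) τ β hτ).injOn
    hα₁ hα₂ (e1.trans e2.symm)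

/-- Claim 1 (horizontal half-lines): for positive `λⱼ`, `τ > 0`, `a > 0`, two roots of
`(z+λ₁)⋯(z+λₙ) + a e^{-τz} = 0` of the form `α₁ + β i`, `α₂ + β i` with
`α₁, α₂ > 0` must coincide: `α₁ = α₂`. -/
theorem horizontal_halfline_at_most_one_root
    (n : ℕ) (hn : 0 < n) (lam : Fin n → ℝ) (hlam : ∀ j, 0 < lam j)
    (τ a : ℝ) (hτ : 0 < τ) (ha : 0 < a)
    (α₁ α₂ β : ℝ) (hα₁ : 0 < α₁) (hα₂ : 0 < α₂)
    (h1 : (∏ j, (((α₁ : ℂ) + (β : ℂ) * Complex.I) + (lam j : ℂ)))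
        + (a : ℂ) * Complex.exp (-(τ : ℂ) * ((α₁ : ℂ) + (β : ℂ) * Complex.I)) = 0)
    (h2 : (∏ j, (((α₂ : ℂ) + (β : ℂ) * Complex.I) + (lam j : ℂ)))
        + (a : ℂ) * Complex.exp (-(τ : ℂ) * ((α₂ : ℂ) + (β : ℂ) * Complex.I)) = 0) :
    α₁ = α₂ :=
  horizontal_halfline_at_most_one_root_general n lam hlam τ a hτ α₁ α₂ β hα₁ hα₂ h1 h2
end

section
/- Let n be a positive integer, λ_1,…,λ_n positive reals, τ > 0. For each integer k ≥ 1 let ω_k > 0 be the unique solution of Σ_{j=1}^{n} arctan(ω/λ_j) = (2k−1)π − ωτ, and set a_k = √(Π_{j=1}^{n}(ω_k² + λ_j²)). Let m = ⌊(n+1)/2⌋. Then for every a ≥ a_m the characteristic equation (z+λ_1)(z+λ_2)⋯(z+λ_n) + a·e^{−τz} = 0 has no real roots. -/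
/-!
A real root `z` makes `∏ (z + λⱼ) = -a e^{-τz}` negative, so `z = -t` with `t ≥ 0`, and taking
moduli `∏ |λⱼ - t| = a e^{τt}`. Put `W = ω_m` and `θⱼ = arctan (W/λⱼ) < π/2`. Elementary
estimates based on `e^x ≥ 1 + x` give `|λⱼ - t| < √(W² + λⱼ²) e^{(t/W)(π - θⱼ)}` for every `j`,
and `λⱼ - t < √(W² + λⱼ²) e^{-(t/W)θⱼ}`. For odd `n` use the first bound for all factors; for
even `n` the negative product has a positive factor `λⱼ - t`, on which the second bound is used.
Since `2m - 1` is `n` resp. `n - 1`, the phase equation `Σ θⱼ = (2m - 1)π - Wτ` makes the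
exponents add up to `τt`, whence `a e^{τt} < a_m e^{τt}`, contradicting `a ≥ a_m`.
-/

open Real Finset

namespace Real

lemma arctan_le_self {x : ℝ} (hx : 0 ≤ x) : arctan x ≤ x := by
  simpa using le_tan (arctan_nonneg.2 hx) (arctan_lt_pi_div_two x)

lemma abs_sub_lt_sqrt_mul_exp {l W t c : ℝ} (hW : 0 < W) (ht : 0 ≤ t) (hc : 1 ≤ c) :
    |l - t| < √(W ^ 2 + l ^ 2) * exp (t / W * c) := by
  set r := √(W ^ 2 + l ^ 2)
  have hl : |l| < r := (lt_sqrt (abs_nonneg l)).2 (by rw [sq_abs]; nlinarith)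
  have hWr : W ≤ r := le_sqrt_of_sq_le (by nlinarith)
  have hs : 0 ≤ t / W := div_nonneg ht hW.le
  calc |l - t| ≤ |l| + t := by simpa [abs_of_nonneg ht] using abs_sub l t
    _ < r + r * (t / W) := by
        refine add_lt_add_of_lt_of_le hl ?_
        calc t = W * (t / W) := by field_simp
          _ ≤ r * (t / W) := by gcongr
    _ = r * (t / W + 1) := by ring
    _ ≤ r * exp (t / W) := by gcongr; exact add_one_le_exp _
    _ ≤ r * exp (t / W * c) := by gcongr; exact le_mul_of_one_le_right hs hc

lemma sub_lt_sqrt_mul_exp_neg_arctan {l W t : ℝ} (hl : 0 < l) (hW : 0 < W) (ht : 0 ≤ t) :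
    l - t < √(W ^ 2 + l ^ 2) * exp (-(t / W * arctan (W / l))) := by
  have hθ : t / W * arctan (W / l) ≤ t / l :=
    calc t / W * arctan (W / l) ≤ t / W * (W / l) := by
          gcongr; exact arctan_le_self (by positivity)
      _ = t / l := by field_simp
  have hexp : 1 - t / l ≤ exp (-(t / W * arctan (W / l))) :=
    calc 1 - t / l ≤ exp (-(t / l)) := by linarith [add_one_le_exp (-(t / l))]
      _ ≤ _ := by gcongr
  have hlr : l < √(W ^ 2 + l ^ 2) := (lt_sqrt hl.le).2 (by nlinarith)
  calc l - t = l * (1 - t / l) := by field_simp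
    _ ≤ l * exp (-(t / W * arctan (W / l))) := by gcongr
    _ < _ := by gcongr

end Real

lemma Finset.exists_pos_of_prod_neg_of_even_card {ι R : Type*} [CommRing R] [LinearOrder R]
    [IsStrictOrderedRing R] {s : Finset ι} {f : ι → R} (hs : Even #s) (h : ∏ i ∈ s, f i < 0) :
    ∃ i ∈ s, 0 < f i := by
  classical
  by_contra! hf
  refine h.not_ge (prod_nonneg_of_card_nonpos_even ?_)
  rwa [filter_true_of_mem hf]

lemma Finset.prod_lt_prod_of_nonempty_of_nonneg {ι R : Type*} [CommMonoidWithZero R]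
    [PartialOrder R] [ZeroLEOneClass R] [PosMulStrictMono R] [Nontrivial R] {s : Finset ι}
    {f g : ι → R} (hf : ∀ i ∈ s, 0 ≤ f i) (hfg : ∀ i ∈ s, f i < g i) (hs : s.Nonempty) :
    ∏ i ∈ s, f i < ∏ i ∈ s, g i := by
  have hg : 0 < ∏ i ∈ s, g i := prod_pos fun i hi => (hf i hi).trans_lt (hfg i hi)
  by_cases hpos : ∀ i ∈ s, 0 < f i
  · exact prod_lt_prod_of_nonempty hpos hfg hs
  · obtain ⟨i, hi, hfi⟩ := not_forall₂.1 hpos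
    rwa [prod_eq_zero hi ((hf i hi).eq_of_not_lt hfi).symm]

lemma exists_finset_pos_card_eq_succ_mod_two_of_prod_neg {ι R : Type*} [Fintype ι] [CommRing R]
    [LinearOrder R] [IsStrictOrderedRing R] {f : ι → R} (h : ∏ i, f i < 0) :
    ∃ S : Finset ι, #S = (Fintype.card ι + 1) % 2 ∧ ∀ i ∈ S, 0 < f i := by
  rcases Nat.even_or_odd (Fintype.card ι) with he | ho
  · obtain ⟨i, -, hi⟩ := exists_pos_of_prod_neg_of_even_card (s := univ) (by rwa [card_univ]) h
    refine ⟨{i}, ?_, by simpa⟩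
    rw [card_singleton, Nat.succ_mod_two_eq_one_iff.2 (Nat.even_iff.1 he)]
  · exact ⟨∅, by rw [card_empty, Nat.succ_mod_two_eq_zero_iff.2 (Nat.odd_iff.1 ho)], by simp⟩

lemma prod_abs_sub_lt_sqrt_mul_exp {ι : Type*} [Fintype ι] [Nonempty ι] {lam : ι → ℝ}
    (hlam : ∀ i, 0 < lam i) {W t : ℝ} (hW : 0 < W) (ht : 0 ≤ t) {S : Finset ι}
    (hS : ∀ i ∈ S, t ≤ lam i) :
    ∏ i, |lam i - t| < √(∏ i, (W ^ 2 + lam i ^ 2)) *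
      exp (t / W * ((Fintype.card ι - #S) * π - ∑ i, arctan (W / lam i))) := by
  classical
  set c : ι → ℝ := fun i => π - arctan (W / lam i) - if i ∈ S then π else 0
  have hfactor : ∀ i, |lam i - t| < √(W ^ 2 + lam i ^ 2) * exp (t / W * c i) := by
    intro i
    by_cases hi : i ∈ S
    · rw [abs_of_nonneg (sub_nonneg.2 (hS i hi))]
      convert sub_lt_sqrt_mul_exp_neg_arctan (hlam i) hW ht using 3
      simp only [c, if_pos hi]
      ring
    · refine abs_sub_lt_sqrt_mul_exp hW ht ?_
      simp only [c, if_neg hi, sub_zero]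
      linarith [arctan_lt_pi_div_two (W / lam i), pi_gt_three]
  have hsum : ∑ i, c i = (Fintype.card ι - #S) * π - ∑ i, arctan (W / lam i) := by
    simp only [c, sum_sub_distrib, sum_ite_mem, univ_inter, sum_const, card_univ, nsmul_eq_mul]
    ring
  rw [sqrt_prod _ fun i _ => by positivity, ← hsum, mul_sum, exp_sum, ← prod_mul_distrib]
  exact prod_lt_prod_of_nonempty_of_nonneg (fun i _ => abs_nonneg _) (fun i _ => hfactor i)
    univ_nonempty

theorem no_real_roots_above_a_m_general
    (n : ℕ) (hn : 0 < n) (lam : Fin n → ℝ) (hlam : ∀ j, 0 < lam j)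
    (τ : ℝ)
    (ω : ℕ → ℝ)
    (hω : ∀ k : ℕ, 1 ≤ k → 0 < ω k ∧
      (∑ j, Real.arctan (ω k / lam j)) = (2 * (k : ℝ) - 1) * Real.pi - ω k * τ)
    (A : ℕ → ℝ)
    (hA : ∀ k : ℕ, A k = Real.sqrt (∏ j, (ω k ^ 2 + lam j ^ 2))) :
    ∀ a : ℝ, A ((n + 1) / 2) ≤ a → ∀ z : ℝ,
      (∏ j, (z + lam j)) + a * Real.exp (-τ * z) ≠ 0 := by
  intro a ha z hz
  set m := (n + 1) / 2
  obtain ⟨t, rfl⟩ : ∃ t, z = -t := ⟨-z, (neg_neg z).symm⟩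
  obtain ⟨hW, hphase⟩ := hω m (by omega)
  have : Nonempty (Fin n) := ⟨⟨0, hn⟩⟩
  have ha_pos : 0 < a := (hA m ▸ sqrt_pos.2 (prod_pos fun j _ => by positivity)).trans_le ha
  have hprod : ∏ j, (lam j - t) = -(a * exp (τ * t)) := by
    rw [← prod_congr rfl fun j _ => neg_add_eq_sub t (lam j)]
    rw [show -τ * -t = τ * t by ring] at hz
    linear_combination hz
  have hneg : ∏ j, (lam j - t) < 0 := hprod ▸ neg_neg_of_pos (by positivity)
  have ht : 0 ≤ t := by
    by_contra! ht
    exact hneg.not_ge (prod_nonneg fun j _ => by linarith [hlam j])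
  obtain ⟨S, hS_card, hS⟩ := exists_finset_pos_card_eq_succ_mod_two_of_prod_neg hneg
  have key := prod_abs_sub_lt_sqrt_mul_exp hlam hW ht fun j hj => (sub_pos.1 (hS j hj)).le
  have hphase_S :
      ((Fintype.card (Fin n) : ℝ) - #S) * π - ∑ j, arctan (ω m / lam j) = ω m * τ := by
    have hdiv : ((n + 1) % 2 : ℕ) + 2 * (m : ℝ) = n + 1 := by
      exact_mod_cast Nat.mod_add_div (n + 1) 2
    rw [hS_card, Fintype.card_fin, hphase]
    linear_combination (-π) * hdiv
  rw [hphase_S, ← hA, ← abs_prod, hprod, abs_neg, abs_of_pos (by positivity),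
    show t / ω m * (ω m * τ) = τ * t by field_simp] at key
  exact key.not_ge (by gcongr)

/-- Corollary 1: with `ω_k` the unique positive solution of
`Σⱼ arctan(ω/λⱼ) = (2k-1)π - ωτ`, `a_k = √(Πⱼ(ω_k² + λⱼ²))` and `m = ⌊(n+1)/2⌋`,
for every `a ≥ a_m` the characteristic equation `(z+λ₁)⋯(z+λₙ) + a e^{-τz} = 0`
has no real roots. -/
theorem no_real_roots_above_a_m
    (n : ℕ) (hn : 0 < n) (lam : Fin n → ℝ) (hlam : ∀ j, 0 < lam j)
    (τ : ℝ) (hτ : 0 < τ)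
    (ω : ℕ → ℝ)
    (hω : ∀ k : ℕ, 1 ≤ k → 0 < ω k ∧
      (∑ j, Real.arctan (ω k / lam j)) = (2 * (k : ℝ) - 1) * Real.pi - ω k * τ)
    (hωuniq : ∀ k : ℕ, 1 ≤ k → ∀ w : ℝ, 0 < w →
      (∑ j, Real.arctan (w / lam j)) = (2 * (k : ℝ) - 1) * Real.pi - w * τ → w = ω k)
    (A : ℕ → ℝ)
    (hA : ∀ k : ℕ, A k = Real.sqrt (∏ j, (ω k ^ 2 + lam j ^ 2))) :
    ∀ a : ℝ, A ((n + 1) / 2) ≤ a → ∀ z : ℝ,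
      (∏ j, (z + lam j)) + a * Real.exp (-τ * z) ≠ 0 :=
  no_real_roots_above_a_m_general n hn lam hlam τ ω hω A hA
end

section
/- Let n be a positive integer, λ_1,…,λ_n positive reals, τ > 0, and let f_1,…,f_n : ℝ → ℝ be continuous, with f_j satisfying positive feedback for 1 ≤ j ≤ n−1, f_n satisfying negative feedback, and f_n(x) ≤ M for some M > 0 and all x ∈ ℝ. Then there exists a constant K > 0, depending only on τ, λ_1,…,λ_n and f_1,…,f_n, such that every solution x = (x_1,…,x_n) of the cyclic system on [0,∞) is bounded on [0,∞), and moreover there exists a time t_x ≥ 0 (depending on the solution) with |x(t)| ≤ K for all t ≥ t_x, where |·| denotes the Euclidean norm on ℝ^n. -/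
lemma key0 (lam A a : ℝ) (hlam : 0 < lam) (y g : ℝ → ℝ)
    (hy : ContinuousOn y (Set.Ici a))
    (hd : ∀ t, a < t → HasDerivAt y (g t) t)
    (hg : ∀ t, a < t → g t ≤ -lam * y t + A) :
    ∀ t, a ≤ t → y t ≤ (y a - A / lam) * Real.exp (lam * (a - t)) + A / lam := by
  set F : ℝ → ℝ := fun t => (y t - A / lam) * Real.exp (lam * t) with hF
  have hexp : ∀ t : ℝ, HasDerivAt (fun s => Real.exp (lam * s)) (Real.exp (lam * t) * lam) t := by
    intro t
    simpa using ((hasDerivAt_id t).const_mul lam).exp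
  have hFc : ContinuousOn F (Set.Ici a) :=
    (hy.sub continuousOn_const).mul
      ((Real.continuous_exp.comp (continuous_const.mul continuous_id)).continuousOn)
  have hanti : AntitoneOn F (Set.Ici a) := by
    apply antitoneOn_of_deriv_nonpos (convex_Ici a) hFc
    · intro t ht
      rw [interior_Ici] at ht
      exact (((hd t ht).sub_const _).mul (hexp t)).differentiableAt.differentiableWithinAt
    · intro t ht
      rw [interior_Ici] at ht
      have hD : HasDerivAt F (g t * Real.exp (lam * t) + (y t - A / lam) * (Real.exp (lam * t) * lam)) t :=
        ((hd t ht).sub_const _).mul (hexp t)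
      rw [hD.deriv]
      have h1 := hg t ht
      have h2 := Real.exp_pos (lam * t)
      have h3 : A / lam * lam = A := div_mul_cancel₀ A hlam.ne'
      nlinarith [mul_le_mul_of_nonneg_right h1 h2.le]
  intro t hta
  have h1 : F t ≤ F a := hanti (Set.self_mem_Ici) (Set.mem_Ici.mpr hta) hta
  have h2 := Real.exp_pos (lam * t)
  have h3 : (y t - A / lam) ≤ (y a - A / lam) * Real.exp (lam * a) / Real.exp (lam * t) := by
    rw [le_div_iff₀ h2]
    exact h1
  have h4 : (y a - A / lam) * Real.exp (lam * a) / Real.exp (lam * t)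
      = (y a - A / lam) * Real.exp (lam * (a - t)) := by
    rw [mul_div_assoc, ← Real.exp_sub]
    ring_nf
  rw [h4] at h3
  linarith

lemma key (lam A a : ℝ) (hlam : 0 < lam) (hA : 0 ≤ A) (y g : ℝ → ℝ)
    (hy : ContinuousOn y (Set.Ici a))
    (hd : ∀ t, a < t → HasDerivAt y (g t) t)
    (hg : ∀ t, a < t → g t ≤ -lam * y t + A) :
    ∃ b, a ≤ b ∧ ∀ t, b ≤ t → y t ≤ A / lam + 1 := by
  have h0 := key0 lam A a hlam y g hy hd hg
  rcases le_or_gt (y a - A / lam) 0 with hcle | hcpos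
  · refine ⟨a, le_refl a, fun t ht => ?_⟩
    have h1 := h0 t ht
    have h2 := Real.exp_pos (lam * (a - t))
    have h3 : (y a - A / lam) * Real.exp (lam * (a - t)) ≤ 0 :=
      mul_nonpos_of_nonpos_of_nonneg hcle h2.le
    linarith
  · refine ⟨a + max 0 (Real.log (y a - A / lam) / lam),
      le_add_of_nonneg_right (le_max_left _ _), fun t ht => ?_⟩
    have hta : a ≤ t := by
      have := le_max_left (0:ℝ) (Real.log (y a - A / lam) / lam)
      linarith
    have h1 := h0 t hta
    have h5 : Real.log (y a - A / lam) / lam ≤ t - a := by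
      have := le_max_right (0:ℝ) (Real.log (y a - A / lam) / lam)
      linarith
    have h6 : lam * (a - t) ≤ -Real.log (y a - A / lam) := by
      rw [div_le_iff₀ hlam] at h5
      nlinarith
    have h7 : Real.exp (lam * (a - t)) ≤ (y a - A / lam)⁻¹ := by
      rw [← Real.exp_log (x := (y a - A / lam)⁻¹) (by positivity), Real.log_inv]
      exact Real.exp_le_exp.mpr h6
    have h8 : (y a - A / lam) * Real.exp (lam * (a - t)) ≤ 1 := by
      calc (y a - A / lam) * Real.exp (lam * (a - t))
          ≤ (y a - A / lam) * (y a - A / lam)⁻¹ :=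
            mul_le_mul_of_nonneg_left h7 hcpos.le
        _ = 1 := mul_inv_cancel₀ hcpos.ne'
    linarith

lemma keyLower (lam A a : ℝ) (hlam : 0 < lam) (hA : 0 ≤ A) (y g : ℝ → ℝ)
    (hy : ContinuousOn y (Set.Ici a))
    (hd : ∀ t, a < t → HasDerivAt y (g t) t)
    (hg : ∀ t, a < t → -lam * y t - A ≤ g t) :
    ∃ b, a ≤ b ∧ ∀ t, b ≤ t → -(A / lam + 1) ≤ y t := by
  obtain ⟨b, hb, h⟩ := key lam A a hlam hA (fun t => -(y t)) (fun t => -(g t)) hy.neg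
    (fun t ht => (hd t ht).neg) (fun t ht => by have := hg t ht; linarith)
  exact ⟨b, hb, fun t ht => by have := h t ht; linarith⟩

lemma bound_above (f : ℝ → ℝ) (hf : Continuous f) (h0 : ∀ y < 0, f y ≤ 0)
    (B : ℝ) (hB : 0 ≤ B) : ∃ A, 0 ≤ A ∧ ∀ y ≤ B, f y ≤ A := by
  obtain ⟨z, hz, hmax⟩ := isCompact_Icc.exists_isMaxOn
    (Set.nonempty_Icc.mpr (by linarith : (-1:ℝ) ≤ B)) hf.continuousOn
  refine ⟨max (f z) 0, le_max_right _ _, fun y hy => ?_⟩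
  rcases lt_or_ge y (-1) with h | h
  · exact le_trans (h0 y (by linarith)) (le_max_right _ _)
  · exact le_trans (hmax ⟨h, hy⟩) (le_max_left _ _)


/-- A solution of the cyclic system with delay on `[T, ∞)` (0-indexed components
`x 0, …, x (n-1)`): `x 0` is continuous on `[T-τ, ∞)`, all components are continuous
on `[T, ∞)`, and for `t > T` the equations
`xⱼ'(t) = -λⱼ xⱼ(t) + fⱼ(x_{j+1}(t))` for `j+1 < n` and
`x_{n-1}'(t) = -λ_{n-1} x_{n-1}(t) + f_{n-1}(x₀(t-τ))` hold. -/
def IsCyclicSolution (n : ℕ) (lam : ℕ → ℝ) (τ : ℝ) (f : ℕ → ℝ → ℝ)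
    (T : ℝ) (x : ℕ → ℝ → ℝ) : Prop :=
  ContinuousOn (x 0) (Set.Ici (T - τ)) ∧
  (∀ j < n, ContinuousOn (x j) (Set.Ici T)) ∧
  ∀ t : ℝ, T < t →
    (∀ j : ℕ, j + 1 < n →
      HasDerivAt (x j) (-lam j * x j t + f j (x (j + 1) t)) t) ∧
    HasDerivAt (x (n - 1)) (-lam (n - 1) * x (n - 1) t + f (n - 1) (x 0 (t - τ))) t

/-- Every solution of the cyclic system with overall negative feedback, where the
last nonlinearity is bounded from above, is bounded; moreover there is a constant
`K > 0` depending only on the data such that every solution eventually satisfies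
`|x(t)| ≤ K` (Euclidean norm). -/
theorem solutions_bounded_and_eventually_uniformly_bounded
    (n : ℕ) (hn : 0 < n) (lam : ℕ → ℝ) (hlam : ∀ j < n, 0 < lam j)
    (τ : ℝ) (hτ : 0 < τ) (f : ℕ → ℝ → ℝ) (hf : ∀ j < n, Continuous (f j))
    (hpos : ∀ j < n - 1, ∀ y : ℝ, y ≠ 0 → 0 < y * f j y)
    (hneg : ∀ y : ℝ, y ≠ 0 → y * f (n - 1) y < 0)
    (M : ℝ) (hM : 0 < M) (hbdd : ∀ y : ℝ, f (n - 1) y ≤ M) :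
    ∃ K : ℝ, 0 < K ∧
      ∀ x : ℕ → ℝ → ℝ, IsCyclicSolution n lam τ f 0 x →
        (∃ C : ℝ, ∀ t : ℝ, 0 ≤ t → ∀ j < n, |x j t| ≤ C) ∧
        (∃ tx : ℝ, 0 ≤ tx ∧ ∀ t : ℝ, tx ≤ t →
          Real.sqrt (∑ j ∈ Finset.range n, (x j t) ^ 2) ≤ K) := by
  have claimU : ∀ k, k < n → ∃ U : ℝ, 0 < U ∧ ∀ x : ℕ → ℝ → ℝ,
      IsCyclicSolution n lam τ f 0 x →
      ∃ t₀ : ℝ, 0 ≤ t₀ ∧ ∀ t, t₀ ≤ t → x (n - 1 - k) t ≤ U := by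
    intro k
    induction k with
    | zero =>
      intro _
      have hl := hlam (n-1) (by omega)
      refine ⟨M / lam (n-1) + 1, by positivity, fun x hx => ?_⟩
      obtain ⟨hx1, hx2, hx3⟩ := hx
      obtain ⟨b, hb, h⟩ := key (lam (n-1)) M 0 hl hM.le (x (n-1))
        (fun t => -lam (n-1) * x (n-1) t + f (n-1) (x 0 (t - τ)))
        (hx2 (n-1) (by omega))
        (fun t ht => (hx3 t ht).2)
        (fun t ht => by have := hbdd (x 0 (t - τ)); linarith)
      exact ⟨b, hb, fun t ht => by simpa using h t ht⟩
    | succ k ih =>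
      intro hk
      obtain ⟨U, hU, hUx⟩ := ih (by omega)
      have hjn : n - 1 - (k+1) < n - 1 := by omega
      have hj1 : n - 1 - (k+1) + 1 = n - 1 - k := by omega
      have hl := hlam (n - 1 - (k+1)) (by omega)
      have h0 : ∀ y < 0, f (n - 1 - (k+1)) y ≤ 0 := fun y hy => by
        by_contra h
        have := hpos (n - 1 - (k+1)) hjn y hy.ne
        nlinarith
      obtain ⟨A, hA, hAb⟩ := bound_above (f (n - 1 - (k+1))) (hf (n - 1 - (k+1)) (by omega)) h0 U hU.le
      refine ⟨A / lam (n - 1 - (k+1)) + 1, by positivity, fun x hx => ?_⟩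
      obtain ⟨t₀, ht₀, hU'⟩ := hUx x hx
      obtain ⟨hx1, hx2, hx3⟩ := hx
      obtain ⟨b, hb, h⟩ := key (lam (n - 1 - (k+1))) A t₀ hl hA (x (n - 1 - (k+1)))
        (fun t => -lam (n - 1 - (k+1)) * x (n - 1 - (k+1)) t
          + f (n - 1 - (k+1)) (x (n - 1 - (k+1) + 1) t))
        ((hx2 (n - 1 - (k+1)) (by omega)).mono (Set.Ici_subset_Ici.mpr ht₀))
        (fun t ht => (hx3 t (lt_of_le_of_lt ht₀ ht)).1 (n - 1 - (k+1)) (by omega))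
        (fun t ht => by
          have h1 : x (n - 1 - (k+1) + 1) t ≤ U := by rw [hj1]; exact hU' t ht.le
          have h2 := hAb (x (n - 1 - (k+1) + 1) t) h1
          linarith)
      exact ⟨b, le_trans ht₀ hb, fun t ht => h t ht⟩
  have claimL : ∀ k, k < n → ∃ L : ℝ, 0 < L ∧ ∀ x : ℕ → ℝ → ℝ,
      IsCyclicSolution n lam τ f 0 x →
      ∃ t₀ : ℝ, 0 ≤ t₀ ∧ ∀ t, t₀ ≤ t → -L ≤ x (n - 1 - k) t := by
    intro k
    induction k with
    | zero =>
      intro _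
      obtain ⟨U0, hU0, hU0x⟩ := claimU (n-1) (by omega)
      have hzero : n - 1 - (n-1) = 0 := by omega
      rw [hzero] at hU0x
      have hl := hlam (n-1) (by omega)
      have h0 : ∀ y < 0, -(f (n-1) y) ≤ 0 := fun y hy => by
        have := hneg y hy.ne; nlinarith
      obtain ⟨A, hA, hAb⟩ := bound_above (fun y => -(f (n-1) y)) (hf (n-1) (by omega)).neg h0 U0 hU0.le
      refine ⟨A / lam (n-1) + 1, by positivity, fun x hx => ?_⟩
      obtain ⟨t₀, ht₀, hUp⟩ := hU0x x hx
      obtain ⟨hx1, hx2, hx3⟩ := hx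
      obtain ⟨b, hb, h⟩ := keyLower (lam (n-1)) A (t₀ + τ) hl hA (x (n-1))
        (fun t => -lam (n-1) * x (n-1) t + f (n-1) (x 0 (t - τ)))
        ((hx2 (n-1) (by omega)).mono (Set.Ici_subset_Ici.mpr (by linarith)))
        (fun t ht => (hx3 t (by linarith)).2)
        (fun t ht => by
          have h1 : x 0 (t - τ) ≤ U0 := hUp (t - τ) (by linarith)
          have h2 := hAb (x 0 (t - τ)) h1
          linarith)
      exact ⟨b, by linarith, fun t ht => by simpa using h t ht⟩
    | succ k ih =>
      intro hk
      obtain ⟨L, hL, hLx⟩ := ih (by omega)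
      have hjn : n - 1 - (k+1) < n - 1 := by omega
      have hj1 : n - 1 - (k+1) + 1 = n - 1 - k := by omega
      have hl := hlam (n - 1 - (k+1)) (by omega)
      have h0 : ∀ y < 0, -(f (n - 1 - (k+1)) (-y)) ≤ 0 := fun y hy => by
        have hy' : (-y : ℝ) ≠ 0 := neg_ne_zero.mpr hy.ne
        have := hpos (n - 1 - (k+1)) hjn (-y) hy'
        nlinarith
      obtain ⟨A, hA, hAb⟩ := bound_above (fun y => -(f (n - 1 - (k+1)) (-y)))
        (((hf (n - 1 - (k+1)) (by omega)).comp continuous_neg).neg) h0 L hL.le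
      refine ⟨A / lam (n - 1 - (k+1)) + 1, by positivity, fun x hx => ?_⟩
      obtain ⟨t₀, ht₀, hLow⟩ := hLx x hx
      obtain ⟨hx1, hx2, hx3⟩ := hx
      obtain ⟨b, hb, h⟩ := keyLower (lam (n - 1 - (k+1))) A t₀ hl hA (x (n - 1 - (k+1)))
        (fun t => -lam (n - 1 - (k+1)) * x (n - 1 - (k+1)) t
          + f (n - 1 - (k+1)) (x (n - 1 - (k+1) + 1) t))
        ((hx2 (n - 1 - (k+1)) (by omega)).mono (Set.Ici_subset_Ici.mpr ht₀))
        (fun t ht => (hx3 t (lt_of_le_of_lt ht₀ ht)).1 (n - 1 - (k+1)) (by omega))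
        (fun t ht => by
          have h1 : -L ≤ x (n - 1 - (k+1) + 1) t := by rw [hj1]; exact hLow t ht.le
          have h2 := hAb (-(x (n - 1 - (k+1) + 1) t)) (by linarith)
          simp only [neg_neg] at h2
          linarith)
      exact ⟨b, le_trans ht₀ hb, fun t ht => h t ht⟩
  have comp : ∀ j, j < n → ∃ U : ℝ, 0 < U ∧ ∀ x : ℕ → ℝ → ℝ,
      IsCyclicSolution n lam τ f 0 x →
      ∃ t₀ : ℝ, 0 ≤ t₀ ∧ ∀ t, t₀ ≤ t → |x j t| ≤ U := by
    intro j hjn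
    obtain ⟨U, hU, hUx⟩ := claimU (n-1-j) (by omega)
    obtain ⟨L, hL, hLx⟩ := claimL (n-1-j) (by omega)
    have hidx : n - 1 - (n-1-j) = j := by omega
    rw [hidx] at hUx hLx
    refine ⟨max U L, lt_of_lt_of_le hU (le_max_left _ _), fun x hx => ?_⟩
    obtain ⟨t₁, ht₁, h1⟩ := hUx x hx
    obtain ⟨t₂, ht₂, h2⟩ := hLx x hx
    refine ⟨max t₁ t₂, le_trans ht₁ (le_max_left _ _), fun t ht => ?_⟩
    rw [abs_le]
    constructor
    · have ha := h2 t (le_trans (le_max_right _ _) ht)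
      have hb : -(max U L) ≤ -L := neg_le_neg (le_max_right _ _)
      linarith
    · exact le_trans (h1 t (le_trans (le_max_left _ _) ht)) (le_max_left _ _)
  have agg : ∀ m, m ≤ n → ∃ Ub : ℝ, 0 < Ub ∧ ∀ x : ℕ → ℝ → ℝ,
      IsCyclicSolution n lam τ f 0 x →
      ∃ t₀ : ℝ, 0 ≤ t₀ ∧ ∀ t, t₀ ≤ t → ∀ j < m, |x j t| ≤ Ub := by
    intro m
    induction m with
    | zero =>
      exact fun _ => ⟨1, one_pos, fun x _ => ⟨0, le_refl 0, fun t _ j hj => absurd hj (Nat.not_lt_zero j)⟩⟩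
    | succ m ih =>
      intro hm
      obtain ⟨Ub, hUb, hUbx⟩ := ih (by omega)
      obtain ⟨Um, hUm, hUmx⟩ := comp m (by omega)
      refine ⟨max Ub Um, lt_of_lt_of_le hUb (le_max_left _ _), fun x hx => ?_⟩
      obtain ⟨t₁, ht₁, h1⟩ := hUbx x hx
      obtain ⟨t₂, ht₂, h2⟩ := hUmx x hx
      refine ⟨max t₁ t₂, le_trans ht₁ (le_max_left _ _), fun t ht j hj => ?_⟩
      rcases Nat.lt_succ_iff_lt_or_eq.mp hj with h | h
      · exact le_trans (h1 t (le_trans (le_max_left _ _) ht) j h) (le_max_left _ _)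
      · subst h
        exact le_trans (h2 t (le_trans (le_max_right _ _) ht)) (le_max_right _ _)
  obtain ⟨Ub, hUb, hagg⟩ := agg n (le_refl n)
  have hsn : 0 < Real.sqrt n := Real.sqrt_pos.mpr (by exact_mod_cast hn)
  refine ⟨Real.sqrt n * Ub, mul_pos hsn hUb, fun x hx => ?_⟩
  obtain ⟨tx, htx, hb⟩ := hagg x hx
  obtain ⟨hx1, hx2, hx3⟩ := hx
  constructor
  · have hjb : ∀ j, ∃ Cj : ℝ, j < n → ∀ t ∈ Set.Icc (0:ℝ) tx, |x j t| ≤ Cj := by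
      intro j
      by_cases hjn : j < n
      · obtain ⟨Cj, hCj⟩ := (isCompact_Icc (a := (0:ℝ)) (b := tx)).exists_bound_of_continuousOn
          ((hx2 j hjn).mono Set.Icc_subset_Ici_self)
        exact ⟨Cj, fun _ t ht => by simpa [Real.norm_eq_abs] using hCj t ht⟩
      · exact ⟨0, fun h => absurd h hjn⟩
    choose Cf hCf using hjb
    refine ⟨Ub + ∑ i ∈ Finset.range n, |Cf i|, fun t ht j hjn => ?_⟩
    have hsum : |Cf j| ≤ ∑ i ∈ Finset.range n, |Cf i| :=
      Finset.single_le_sum (fun i _ => abs_nonneg (Cf i)) (Finset.mem_range.mpr hjn)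
    rcases le_or_gt t tx with h | h
    · have h1 := hCf j hjn t ⟨ht, h⟩
      have h2 := le_abs_self (Cf j)
      linarith
    · have h1 := hb t h.le j hjn
      have h2 : (0:ℝ) ≤ ∑ i ∈ Finset.range n, |Cf i| :=
        Finset.sum_nonneg (fun i _ => abs_nonneg (Cf i))
      linarith
  · refine ⟨tx, htx, fun t ht => ?_⟩
    have h1 : ∑ j ∈ Finset.range n, (x j t) ^ 2 ≤ ∑ j ∈ Finset.range n, Ub ^ 2 := by
      refine Finset.sum_le_sum fun j hj => ?_
      have h2 := hb t ht j (Finset.mem_range.mp hj)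
      rw [abs_le] at h2
      nlinarith [h2.1, h2.2]
    calc Real.sqrt (∑ j ∈ Finset.range n, (x j t) ^ 2)
        ≤ Real.sqrt (∑ j ∈ Finset.range n, Ub ^ 2) := Real.sqrt_le_sqrt h1
      _ = Real.sqrt (n * Ub ^ 2) := by
          rw [Finset.sum_const, Finset.card_range, nsmul_eq_mul]
      _ = Real.sqrt n * Ub := by
          rw [Real.sqrt_mul (by positivity), Real.sqrt_sq hUb.le]
end

section
/- Let ε > 0, let L = [c,d] be a compact interval, let b : [t_0,∞) → ℝ be continuous with b(t) ∈ L for all t ≥ t_0, and let u : [t_0,∞) → ℝ be differentiable and satisfy ε·u′(t) = −u(t) + b(t) for all t ≥ t_0, with u(t_0) ∉ L. Then one of the following holds: (i) there exists a finite t_1 ≥ t_0 such that u(t) ∈ L for all t ≥ t_1; or (ii) u is monotone on [t_0,∞) and u(t) converges as t → ∞ to one of the endpoints c or d of L. -/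
/-!
With the integrating factor `exp (t / ε)`, a solution of `ε u' = -u + b` satisfies
`(exp (t / ε) * (u t - k))' = exp (t / ε) * (b t - k) / ε`, so `exp (t / ε) * (u t - k)` is
antitone whenever `b ≤ k`. Taking `k = d` (and, after `u ↦ -u`, `k = c`) shows that once `u`
reaches `L = [c, d]` it never leaves it. If `u` starts above `d`, either it reaches `d`, and by
the intermediate value theorem it lands in `L`, or it stays above `d` forever; then it decreases,
and the same antitone quantity squeezes it: `d < u t ≤ d + exp ((t₀ - t) / ε) * (u t₀ - d)`.
-/

open Set Filter Topology Real

def SolvesRelaxation (ε t₀ : ℝ) (b u : ℝ → ℝ) : Prop :=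
  ∀ t : ℝ, t₀ ≤ t → HasDerivAt u ((-u t + b t) / ε) t

namespace SolvesRelaxation

variable {ε t₀ c d k : ℝ} {b u : ℝ → ℝ}

theorem neg (h : SolvesRelaxation ε t₀ b u) : SolvesRelaxation ε t₀ (-b) (-u) :=
  fun t ht => (h t ht).neg.congr_deriv (by simp only [Pi.neg_apply]; ring)

theorem continuousOn (h : SolvesRelaxation ε t₀ b u) : ContinuousOn u (Ici t₀) :=
  fun t ht => (h t ht).continuousAt.continuousWithinAt

theorem hasDerivAt_exp_mul_sub (h : SolvesRelaxation ε t₀ b u) {t : ℝ}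
    (ht : t₀ ≤ t) (k : ℝ) :
    HasDerivAt (fun s => exp (s / ε) * (u s - k)) (exp (t / ε) * (b t - k) / ε) t := by
  have hexp : HasDerivAt (fun s => exp (s / ε)) (exp (t / ε) * (1 / ε)) t :=
    ((hasDerivAt_id' t).div_const ε).exp
  exact (hexp.mul ((h t ht).sub_const k)).congr_deriv (by ring)

theorem antitoneOn_exp_mul_sub (hε : 0 < ε) (h : SolvesRelaxation ε t₀ b u)
    (hbk : ∀ t : ℝ, t₀ ≤ t → b t ≤ k) :
    AntitoneOn (fun t => exp (t / ε) * (u t - k)) (Ici t₀) := by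
  refine antitoneOn_of_hasDerivWithinAt_nonpos (convex_Ici t₀)
    (fun t ht => (h.hasDerivAt_exp_mul_sub ht k).continuousAt.continuousWithinAt)
    (fun t ht => (h.hasDerivAt_exp_mul_sub (interior_subset ht) k).hasDerivWithinAt)
    fun t ht => ?_
  have hbt : b t - k ≤ 0 := sub_nonpos.2 (hbk t (interior_subset ht))
  exact div_nonpos_of_nonpos_of_nonneg (mul_nonpos_of_nonneg_of_nonpos (exp_pos _).le hbt) hε.le

theorem le_add_exp_mul (hε : 0 < ε) (h : SolvesRelaxation ε t₀ b u)
    (hbk : ∀ t : ℝ, t₀ ≤ t → b t ≤ k) {t₁ t : ℝ} (ht₁ : t₀ ≤ t₁) (ht : t₁ ≤ t) :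
    u t ≤ k + exp ((t₁ - t) / ε) * (u t₁ - k) := by
  have hmono : exp (t / ε) * (u t - k) ≤ exp (t₁ / ε) * (u t₁ - k) :=
    h.antitoneOn_exp_mul_sub hε hbk ht₁ (ht₁.trans ht) ht
  have hsplit : exp (t₁ / ε) = exp (t / ε) * exp ((t₁ - t) / ε) := by
    rw [← exp_add]; congr 1; ring
  rw [hsplit, mul_assoc] at hmono
  have := le_of_mul_le_mul_left hmono (exp_pos _)
  linarith

theorem le_of_le (hε : 0 < ε) (h : SolvesRelaxation ε t₀ b u)
    (hbk : ∀ t : ℝ, t₀ ≤ t → b t ≤ k) {t₁ : ℝ} (ht₁ : t₀ ≤ t₁) (hu₁ : u t₁ ≤ k) {t : ℝ}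
    (ht : t₁ ≤ t) : u t ≤ k := by
  linarith [h.le_add_exp_mul hε hbk ht₁ ht,
    mul_nonpos_of_nonneg_of_nonpos (exp_pos ((t₁ - t) / ε)).le (sub_nonpos.2 hu₁)]

theorem mem_Icc_of_mem_Icc (hε : 0 < ε) (h : SolvesRelaxation ε t₀ b u)
    (hbL : ∀ t : ℝ, t₀ ≤ t → b t ∈ Icc c d) {t₁ : ℝ} (ht₁ : t₀ ≤ t₁) (hu₁ : u t₁ ∈ Icc c d)
    {t : ℝ} (ht : t₁ ≤ t) : u t ∈ Icc c d := by
  refine ⟨?_, h.le_of_le hε (fun s hs => (hbL s hs).2) ht₁ hu₁.2 ht⟩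
  have := h.neg.le_of_le (k := -c) hε (fun s hs => neg_le_neg (hbL s hs).1) ht₁
    (neg_le_neg hu₁.1) ht
  exact neg_le_neg_iff.mp this

theorem tendsto_of_forall_lt (hε : 0 < ε) (h : SolvesRelaxation ε t₀ b u)
    (hbk : ∀ t : ℝ, t₀ ≤ t → b t ≤ k) (huk : ∀ t : ℝ, t₀ ≤ t → k < u t) :
    Tendsto u atTop (𝓝 k) := by
  have hdecay : Tendsto (fun t => k + exp ((t₀ - t) / ε) * (u t₀ - k)) atTop (𝓝 k) := by
    have hlin : Tendsto (fun t => (t - t₀) / ε) atTop atTop :=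
      (tendsto_atTop_add_const_right _ (-t₀) tendsto_id).atTop_div_const hε
    have := (tendsto_exp_neg_atTop_nhds_zero.comp hlin).mul_const (u t₀ - k) |>.const_add k
    simpa only [Function.comp_def, ← neg_div, neg_sub, zero_mul, add_zero] using this
  refine tendsto_of_tendsto_of_tendsto_of_le_of_le' tendsto_const_nhds hdecay ?_ ?_
  · filter_upwards [eventually_ge_atTop t₀] with t ht using (huk t ht).le
  · filter_upwards [eventually_ge_atTop t₀] with t ht using
      h.le_add_exp_mul hε hbk le_rfl ht

theorem antitoneOn_of_forall_lt (hε : 0 < ε) (h : SolvesRelaxation ε t₀ b u)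
    (hbk : ∀ t : ℝ, t₀ ≤ t → b t ≤ k) (huk : ∀ t : ℝ, t₀ ≤ t → k < u t) :
    AntitoneOn u (Ici t₀) := by
  refine antitoneOn_of_hasDerivWithinAt_nonpos (convex_Ici t₀) h.continuousOn
    (fun t ht => (h t (interior_subset ht)).hasDerivWithinAt) fun t ht => ?_
  have ht₀ : t₀ ≤ t := interior_subset ht
  exact div_nonpos_of_nonpos_of_nonneg (by linarith [hbk t ht₀, huk t ht₀]) hε.le

theorem enters_Icc_or_tendsto_of_gt (hε : 0 < ε) (hcd : c ≤ d) (h : SolvesRelaxation ε t₀ b u)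
    (hbL : ∀ t : ℝ, t₀ ≤ t → b t ∈ Icc c d) (hu₀ : d < u t₀) :
    (∃ t₁ : ℝ, t₀ ≤ t₁ ∧ ∀ t : ℝ, t₁ ≤ t → u t ∈ Icc c d) ∨
      (AntitoneOn u (Ici t₀) ∧ Tendsto u atTop (𝓝 d)) := by
  have hbd : ∀ t : ℝ, t₀ ≤ t → b t ≤ d := fun t ht => (hbL t ht).2
  by_cases hreach : ∃ s : ℝ, t₀ ≤ s ∧ u s ≤ d
  · obtain ⟨s, hs, hus⟩ := hreach
    obtain ⟨t₁, ht₁, hut₁⟩ : d ∈ u '' Icc t₀ s :=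
      intermediate_value_Icc' hs (h.continuousOn.mono Icc_subset_Ici_self) ⟨hus, hu₀.le⟩
    exact Or.inl ⟨t₁, ht₁.1, fun t ht =>
      h.mem_Icc_of_mem_Icc hε hbL ht₁.1 (by rw [hut₁]; exact right_mem_Icc.2 hcd) ht⟩
  · push Not at hreach
    exact Or.inr ⟨h.antitoneOn_of_forall_lt hε hbd hreach, h.tendsto_of_forall_lt hε hbd hreach⟩

theorem enters_Icc_or_tendsto_of_lt (hε : 0 < ε) (hcd : c ≤ d) (h : SolvesRelaxation ε t₀ b u)
    (hbL : ∀ t : ℝ, t₀ ≤ t → b t ∈ Icc c d) (hu₀ : u t₀ < c) :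
    (∃ t₁ : ℝ, t₀ ≤ t₁ ∧ ∀ t : ℝ, t₁ ≤ t → u t ∈ Icc c d) ∨
      (MonotoneOn u (Ici t₀) ∧ Tendsto u atTop (𝓝 c)) := by
  rcases h.neg.enters_Icc_or_tendsto_of_gt hε (neg_le_neg hcd)
      (fun t ht => ⟨neg_le_neg (hbL t ht).2, neg_le_neg (hbL t ht).1⟩) (neg_lt_neg hu₀) with
    ⟨t₁, ht₁, hmem⟩ | ⟨hanti, hlim⟩
  · exact Or.inl ⟨t₁, ht₁, fun t ht =>
      ⟨neg_le_neg_iff.mp (hmem t ht).2, neg_le_neg_iff.mp (hmem t ht).1⟩⟩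
  · refine Or.inr ⟨fun x hx y hy hxy => neg_le_neg_iff.mp (hanti hx hy hxy), ?_⟩
    simpa using hlim.neg

end SolvesRelaxation

theorem solution_enters_interval_or_monotone_general
    (ε t₀ c d : ℝ) (hε : 0 < ε) (hcd : c ≤ d)
    (b u : ℝ → ℝ)
    (hbL : ∀ t : ℝ, t₀ ≤ t → b t ∈ Set.Icc c d)
    (hu : ∀ t : ℝ, t₀ ≤ t → HasDerivAt u ((-u t + b t) / ε) t)
    (hu0 : u t₀ ∉ Set.Icc c d) :
    (∃ t₁ : ℝ, t₀ ≤ t₁ ∧ ∀ t : ℝ, t₁ ≤ t → u t ∈ Set.Icc c d) ∨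
    ((MonotoneOn u (Set.Ici t₀) ∨ AntitoneOn u (Set.Ici t₀)) ∧
      (Filter.Tendsto u Filter.atTop (nhds c) ∨
        Filter.Tendsto u Filter.atTop (nhds d))) := by
  have h : SolvesRelaxation ε t₀ b u := hu
  rcases not_and_or.mp hu0 with hlt | hgt
  · rcases h.enters_Icc_or_tendsto_of_lt hε hcd hbL (not_le.mp hlt) with hL | ⟨hmono, hlim⟩
    · exact Or.inl hL
    · exact Or.inr ⟨Or.inl hmono, Or.inl hlim⟩
  · rcases h.enters_Icc_or_tendsto_of_gt hε hcd hbL (not_le.mp hgt) with hL | ⟨hanti, hlim⟩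
    · exact Or.inl hL
    · exact Or.inr ⟨Or.inr hanti, Or.inr hlim⟩

/-- Proposition 2: if `ε u'(t) = -u(t) + b(t)` with `ε > 0`, `b` continuous with
values in `L = [c,d]` on `[t₀,∞)`, and `u(t₀) ∉ L`, then either (i) `u(t) ∈ L`
for all `t ≥ t₁` and some finite `t₁ ≥ t₀`, or (ii) `u` is monotone on `[t₀,∞)`
and converges at infinity to one of the endpoints `c` or `d`. -/
theorem solution_enters_interval_or_monotone
    (ε t₀ c d : ℝ) (hε : 0 < ε) (hcd : c ≤ d)
    (b u : ℝ → ℝ)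
    (hb : ContinuousOn b (Set.Ici t₀))
    (hbL : ∀ t : ℝ, t₀ ≤ t → b t ∈ Set.Icc c d)
    (hu : ∀ t : ℝ, t₀ ≤ t → HasDerivAt u ((-u t + b t) / ε) t)
    (hu0 : u t₀ ∉ Set.Icc c d) :
    (∃ t₁ : ℝ, t₀ ≤ t₁ ∧ ∀ t : ℝ, t₁ ≤ t → u t ∈ Set.Icc c d) ∨
    ((MonotoneOn u (Set.Ici t₀) ∨ AntitoneOn u (Set.Ici t₀)) ∧
      (Filter.Tendsto u Filter.atTop (nhds c) ∨
        Filter.Tendsto u Filter.atTop (nhds d))) :=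
  solution_enters_interval_or_monotone_general ε t₀ c d hε hcd b u hbL hu hu0
end

section
/- Let n be a positive integer, λ_1,…,λ_n positive reals, τ > 0, and f_1,…,f_n : ℝ → ℝ continuous, with f_j satisfying positive feedback for 1 ≤ j ≤ n−1 and f_n satisfying negative feedback. Let x = (x_1,…,x_n) be a solution of the cyclic system on [0,∞) and suppose for some index k and some T ≥ 0 the component x_k satisfies x_k(t) ≥ 0 for all t ≥ T (or x_k(t) ≤ 0 for all t ≥ T), and x_k is not eventually identically zero (for every s ≥ T there exists t ≥ s with x_k(t) ≠ 0). Then there exists T_1 > T such that |x_j(t)| > 0 for every t ≥ T_1 and every j = 1,…,n; in particular every component is eventually of a strict constant sign, so all components are non-oscillatory. -/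
open Filter Set

/-- The multiplier `c` records the sign, so that both signs are handled at once. -/
def EventuallyStrictSign (u : ℝ → ℝ) : Prop :=
  ∃ c : ℝ, ∀ᶠ t in atTop, 0 < c * u t

def EventuallyWeakSign (u : ℝ → ℝ) : Prop :=
  ∃ c ≠ 0, (∀ᶠ t in atTop, 0 ≤ c * u t) ∧ ∃ᶠ t in atTop, u t ≠ 0

section Sign

variable {u : ℝ → ℝ}

theorem EventuallyStrictSign.eventually_ne_zero (hu : EventuallyStrictSign u) :
    ∀ᶠ t in atTop, u t ≠ 0 := by
  obtain ⟨c, hc⟩ := hu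
  exact hc.mono fun t ht hu => by simp [hu] at ht

theorem EventuallyStrictSign.eventuallyWeakSign (hu : EventuallyStrictSign u) :
    EventuallyWeakSign u := by
  have hne := hu.eventually_ne_zero.frequently
  obtain ⟨c, hc⟩ := hu
  refine ⟨c, ?_, hc.mono fun t ht => ht.le, hne⟩
  rintro rfl
  simpa using hc.exists

theorem EventuallyWeakSign.of_forall_ge {T : ℝ}
    (hsign : (∀ t, T ≤ t → 0 ≤ u t) ∨ (∀ t, T ≤ t → u t ≤ 0))
    (hne : ∀ s, T ≤ s → ∃ t, s ≤ t ∧ u t ≠ 0) : EventuallyWeakSign u := by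
  have hfreq : ∃ᶠ t in atTop, u t ≠ 0 := frequently_atTop.2 fun a => by
    obtain ⟨t, ht, hut⟩ := hne (max a T) (le_max_right a T)
    exact ⟨t, (le_max_left a T).trans ht, hut⟩
  rcases hsign with hsign | hsign
  · exact ⟨1, one_ne_zero, eventually_atTop.2 ⟨T, by simpa using hsign⟩, hfreq⟩
  · exact ⟨-1, by norm_num, eventually_atTop.2 ⟨T, by simpa using hsign⟩, hfreq⟩

theorem EventuallyWeakSign.neg (hu : EventuallyWeakSign u) :
    EventuallyWeakSign fun t => -u t := by
  obtain ⟨c, hc, hnonneg, hne⟩ := hu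
  exact ⟨-c, neg_ne_zero.2 hc, by simpa using hnonneg, by simpa using hne⟩

theorem EventuallyWeakSign.comp_sub_const (hu : EventuallyWeakSign u) (τ : ℝ) :
    EventuallyWeakSign fun t => u (t - τ) := by
  obtain ⟨c, hc, hnonneg, hne⟩ := hu
  refine ⟨c, hc, (tendsto_atTop_add_const_right atTop (-τ) tendsto_id).eventually hnonneg,
    frequently_atTop.2 fun a => ?_⟩
  obtain ⟨b, hb, hub⟩ := frequently_atTop.1 hne (a - τ)
  exact ⟨b + τ, by linarith, by simpa using hub⟩

theorem MonotoneOn.eventuallyStrictSign {S : ℝ} (hu : MonotoneOn u (Ici S))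
    (hne : ∃ᶠ t in atTop, u t ≠ 0) : EventuallyStrictSign u := by
  by_cases hpos : ∃ t₀ ≥ S, 0 < u t₀
  · obtain ⟨t₀, ht₀, hut₀⟩ := hpos
    refine ⟨1, eventually_atTop.2 ⟨t₀, fun t ht => ?_⟩⟩
    have := hu ht₀ (ht₀.trans ht) ht
    linarith
  · push Not at hpos
    refine ⟨-1, eventually_atTop.2 ⟨S, fun t ht => ?_⟩⟩
    obtain ⟨t', ht', hut'⟩ := frequently_atTop.1 hne t
    have hmono := hu ht (ht.trans ht') ht'
    have := lt_of_le_of_ne (hpos t' (ht.trans ht')) hut'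
    linarith

end Sign

section Feedback

variable {f : ℝ → ℝ}

theorem map_zero_of_pos_feedback (hf : ContinuousAt f 0) (hpos : ∀ y ≠ 0, 0 < y * f y) :
    f 0 = 0 := by
  have hright : 0 ≤ f 0 := ge_of_tendsto (hf.tendsto.mono_left nhdsWithin_le_nhds)
    (eventually_nhdsWithin_of_forall (s := Ioi 0) fun y (hy : 0 < y) =>
      (pos_of_mul_pos_right (hpos y hy.ne') hy.le).le)
  have hleft : f 0 ≤ 0 := le_of_tendsto (hf.tendsto.mono_left nhdsWithin_le_nhds)
    (eventually_nhdsWithin_of_forall (s := Iio 0) fun y (hy : y < 0) =>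
      (neg_of_mul_pos_right (hpos y hy.ne) hy.le).le)
  exact le_antisymm hleft hright

theorem EventuallyWeakSign.comp_of_pos_feedback {u : ℝ → ℝ} (hf : ContinuousAt f 0)
    (hpos : ∀ y ≠ 0, 0 < y * f y) (hu : EventuallyWeakSign u) :
    EventuallyWeakSign fun t => f (u t) := by
  obtain ⟨c, hc, hnonneg, hne⟩ := hu
  refine ⟨c, hc, hnonneg.mono fun t ht => ?_, hne.mono fun t ht hft => ?_⟩
  · rcases eq_or_ne (u t) 0 with h0 | h0
    · simp [h0, map_zero_of_pos_feedback hf hpos]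
    · nlinarith [hpos _ h0, mul_self_pos.2 h0]
  · simpa [hft] using hpos _ ht

theorem EventuallyWeakSign.comp_of_neg_feedback {u : ℝ → ℝ} (hf : ContinuousAt f 0)
    (hneg : ∀ y ≠ 0, y * f y < 0) (hu : EventuallyWeakSign u) :
    EventuallyWeakSign fun t => f (u t) := by
  simpa using (hu.comp_of_pos_feedback (f := fun y => -f y) hf.neg
    fun y hy => by simpa using hneg y hy).neg

end Feedback

section LinearEquation

variable {lam : ℝ} {y F : ℝ → ℝ}

theorem frequently_ne_zero_of_hasDerivAt
    (hder : ∀ᶠ t in atTop, HasDerivAt y (-lam * y t + F t) t)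
    (hF : ∃ᶠ t in atTop, F t ≠ 0) : ∃ᶠ t in atTop, y t ≠ 0 := by
  refine fun hy => hF ?_
  obtain ⟨a, ha⟩ := eventually_atTop.1 (hy.and hder)
  refine eventually_atTop.2 ⟨a + 1, fun t ht => ?_⟩
  have hzero : y =ᶠ[nhds t] fun _ => 0 := eventually_of_mem (Ioi_mem_nhds (by linarith : a < t))
    fun s hs => not_not.1 (ha s hs.le).1
  obtain ⟨hyt, hdert⟩ := ha t (by linarith)
  have := hdert.unique ((hasDerivAt_const t 0).congr_of_eventuallyEq hzero)
  simpa [not_not.1 hyt] using this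

theorem hasDerivAt_exp_mul_of_hasDerivAt {t : ℝ} (hder : HasDerivAt y (-lam * y t + F t) t) :
    HasDerivAt (fun s => Real.exp (lam * s) * y s) (Real.exp (lam * t) * F t) t := by
  have hexp : HasDerivAt (fun s => Real.exp (lam * s)) (Real.exp (lam * t) * (lam * 1)) t :=
    ((hasDerivAt_id t).const_mul lam).exp
  exact (hexp.mul hder).congr_deriv (by ring)

theorem EventuallyWeakSign.eventuallyStrictSign_of_hasDerivAt (hF : EventuallyWeakSign F)
    (hder : ∀ᶠ t in atTop, HasDerivAt y (-lam * y t + F t) t) : EventuallyStrictSign y := by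
  obtain ⟨c, hc, hnonneg, hne⟩ := hF
  obtain ⟨S, hS⟩ := eventually_atTop.1 (hder.and hnonneg)
  set g : ℝ → ℝ := fun t => c * (Real.exp (lam * t) * y t)
  have hg : ∀ t ≥ S, HasDerivAt g (c * (Real.exp (lam * t) * F t)) t := fun t ht =>
    (hasDerivAt_exp_mul_of_hasDerivAt (hS t ht).1).const_mul c
  have hmono : MonotoneOn g (Ici S) := by
    refine monotoneOn_of_hasDerivWithinAt_nonneg (f' := fun t => c * (Real.exp (lam * t) * F t))
      (convex_Ici S)
      (fun t ht => (hg t ht).continuousAt.continuousWithinAt) (fun t ht => ?_) fun t ht => ?_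
    · exact (hg t (interior_subset ht)).hasDerivWithinAt
    · have := (hS t (interior_subset ht)).2
      rw [mul_left_comm]
      exact mul_nonneg (Real.exp_pos _).le this
  have hgne : ∃ᶠ t in atTop, g t ≠ 0 := (frequently_ne_zero_of_hasDerivAt hder hne).mono
    fun t ht => mul_ne_zero hc (mul_ne_zero (Real.exp_pos _).ne' ht)
  obtain ⟨d, hd⟩ := hmono.eventuallyStrictSign hgne
  refine ⟨d * c, hd.mono fun t ht => ?_⟩
  have : 0 < Real.exp (lam * t) * (d * c * y t) := by simp only [g] at ht; linarith
  exact pos_of_mul_pos_right this (Real.exp_pos _).le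

end LinearEquation

namespace IsCyclicSolution

variable {n : ℕ} {lam : ℕ → ℝ} {τ : ℝ} {f : ℕ → ℝ → ℝ} {T₀ : ℝ} {x : ℕ → ℝ → ℝ}

theorem eventuallyStrictSign_of_succ (hx : IsCyclicSolution n lam τ f T₀ x) {j : ℕ}
    (hj : j + 1 < n) (hf : ContinuousAt (f j) 0) (hpos : ∀ y ≠ 0, 0 < y * f j y)
    (hsucc : EventuallyWeakSign (x (j + 1))) : EventuallyStrictSign (x j) :=
  (hsucc.comp_of_pos_feedback hf hpos).eventuallyStrictSign_of_hasDerivAt <|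
    (eventually_gt_atTop T₀).mono fun t ht => (hx.2.2 t ht).1 j hj

theorem eventuallyStrictSign_last (hx : IsCyclicSolution n lam τ f T₀ x)
    (hf : ContinuousAt (f (n - 1)) 0) (hneg : ∀ y ≠ 0, y * f (n - 1) y < 0)
    (hfirst : EventuallyWeakSign (x 0)) : EventuallyStrictSign (x (n - 1)) :=
  ((hfirst.comp_sub_const τ).comp_of_neg_feedback hf hneg).eventuallyStrictSign_of_hasDerivAt <|
    (eventually_gt_atTop T₀).mono fun t ht => (hx.2.2 t ht).2

theorem eventuallyStrictSign_of_le (hx : IsCyclicSolution n lam τ f T₀ x)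
    (hf : ∀ j < n, Continuous (f j)) (hpos : ∀ j < n - 1, ∀ y : ℝ, y ≠ 0 → 0 < y * f j y)
    {m : ℕ} (hm : m < n) (hstrict : EventuallyStrictSign (x m)) {j : ℕ} (hjm : j ≤ m) :
    EventuallyStrictSign (x j) := by
  induction hjm using Nat.decreasingInduction with
  | self => exact hstrict
  | of_succ i hi ih =>
    exact hx.eventuallyStrictSign_of_succ (by omega) (hf i (by omega)).continuousAt
      (hpos i (by omega)) ih.eventuallyWeakSign

end IsCyclicSolution

theorem nonoscillatory_component_propagates_general
    (n : ℕ) (lam : ℕ → ℝ)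
    (τ : ℝ) (f : ℕ → ℝ → ℝ) (hf : ∀ j < n, Continuous (f j))
    (hpos : ∀ j < n - 1, ∀ y : ℝ, y ≠ 0 → 0 < y * f j y)
    (hneg : ∀ y : ℝ, y ≠ 0 → y * f (n - 1) y < 0)
    (x : ℕ → ℝ → ℝ) (hx : IsCyclicSolution n lam τ f 0 x)
    (k : ℕ) (hk : k < n) (T : ℝ)
    (hsign : (∀ t : ℝ, T ≤ t → 0 ≤ x k t) ∨ (∀ t : ℝ, T ≤ t → x k t ≤ 0))
    (hnz : ∀ s : ℝ, T ≤ s → ∃ t : ℝ, s ≤ t ∧ x k t ≠ 0) :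
    ∃ T₁ : ℝ, T < T₁ ∧ ∀ j < n, ∀ t : ℝ, T₁ ≤ t → 0 < |x j t| := by
  have hlast : ContinuousAt (f (n - 1)) 0 := (hf (n - 1) (by omega)).continuousAt
  have hk_weak : EventuallyWeakSign (x k) := .of_forall_ge hsign hnz
  have hfirst : EventuallyStrictSign (x 0) := by
    cases k with
    | zero =>
      exact hx.eventuallyStrictSign_of_le hf hpos (by omega)
        (hx.eventuallyStrictSign_last hlast hneg hk_weak) (Nat.zero_le _)
    | succ i =>
      exact hx.eventuallyStrictSign_of_le hf hpos (by omega)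
        (hx.eventuallyStrictSign_of_succ hk (hf i (by omega)).continuousAt (hpos i (by omega))
          hk_weak) (Nat.zero_le i)
  have hall : ∀ j < n, ∀ᶠ t in atTop, x j t ≠ 0 := fun j hj =>
    (hx.eventuallyStrictSign_of_le hf hpos (by omega)
      (hx.eventuallyStrictSign_last hlast hneg hfirst.eventuallyWeakSign)
      (by omega : j ≤ n - 1)).eventually_ne_zero
  obtain ⟨T₁, hT₁⟩ := eventually_atTop.1
    ((eventually_gt_atTop T).and ((eventually_all_finite (finite_lt_nat n)).2 hall))
  exact ⟨T₁, (hT₁ T₁ le_rfl).1, fun j hj t ht => abs_pos.2 ((hT₁ t ht).2 j hj)⟩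

/-- Lemma 7: if one component of a solution of the cyclic system is eventually of
one sign (and not eventually identically zero), then eventually all components
are nonzero, i.e. all components are non-oscillatory with strict sign. -/
theorem nonoscillatory_component_propagates
    (n : ℕ) (hn : 0 < n) (lam : ℕ → ℝ) (hlam : ∀ j < n, 0 < lam j)
    (τ : ℝ) (hτ : 0 < τ) (f : ℕ → ℝ → ℝ) (hf : ∀ j < n, Continuous (f j))
    (hpos : ∀ j < n - 1, ∀ y : ℝ, y ≠ 0 → 0 < y * f j y)
    (hneg : ∀ y : ℝ, y ≠ 0 → y * f (n - 1) y < 0)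
    (x : ℕ → ℝ → ℝ) (hx : IsCyclicSolution n lam τ f 0 x)
    (k : ℕ) (hk : k < n) (T : ℝ) (hT : 0 ≤ T)
    (hsign : (∀ t : ℝ, T ≤ t → 0 ≤ x k t) ∨ (∀ t : ℝ, T ≤ t → x k t ≤ 0))
    (hnz : ∀ s : ℝ, T ≤ s → ∃ t : ℝ, s ≤ t ∧ x k t ≠ 0) :
    ∃ T₁ : ℝ, T < T₁ ∧ ∀ j < n, ∀ t : ℝ, T₁ ≤ t → 0 < |x j t| :=
  nonoscillatory_component_propagates_general n lam τ f hf hpos hneg x hx k hk T hsign hnz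
end

section
/- Let n be a positive integer, λ_1,…,λ_n positive reals, τ > 0, and f_1,…,f_n : ℝ → ℝ continuous, with f_j satisfying positive feedback for 1 ≤ j ≤ n−1 and f_n satisfying negative feedback. Let x = (x_1,…,x_n) be a non-oscillating solution of the cyclic system, i.e., there exists T ≥ 0 such that x_j(t) ≠ 0 for every j = 1,…,n and every t ≥ T. Then every component converges to zero: lim_{t→∞} x_j(t) = 0 for all j = 1,…,n. -/
open Filter Set Topology

theorem eventually_le_of_hasDerivAt_le_neg {y d : ℝ → ℝ} {ε c : ℝ} (hc : 0 < c)
    (hy : ∀ᶠ t in atTop, HasDerivAt y (d t) t) (hd : ∀ᶠ t in atTop, ε ≤ y t → d t ≤ -c) :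
    ∀ᶠ t in atTop, y t ≤ ε := by
  obtain ⟨a, ha⟩ := eventually_atTop.1 (hy.and hd)
  have hcont : ContinuousOn y (Ici a) := fun t ht => (ha t ht).1.continuousAt.continuousWithinAt
  have hderiv : ∀ t ∈ Ici a, HasDerivWithinAt y (d t) (Ici t) t :=
    fun t ht => (ha t ht).1.hasDerivWithinAt
  obtain ⟨t₁, ht₁, hyt₁⟩ : ∃ t₁ ≥ a, y t₁ ≤ ε := by
    by_contra! hgt
    -- `y` decreases at rate at least `c` on `[a, ∞)`, so it would reach `ε` by time `b`
    set b := a + (y a - ε) / c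
    have hab : a ≤ b := le_add_of_nonneg_right (div_nonneg (sub_nonneg.2 (hgt a le_rfl).le) hc.le)
    have hyb : y b ≤ y a - c * (b - a) :=
      image_le_of_deriv_right_le_deriv_boundary (hcont.mono Icc_subset_Ici_self)
        (fun t ht => hderiv t ht.1) (B' := fun _ => -c) (by simp) (by fun_prop)
        (fun t _ => (((hasDerivAt_id t).sub_const a).const_mul c).const_sub (y a)
          |>.hasDerivWithinAt.congr_deriv (by simp))
        (fun t ht => (ha t ht.1).2 (hgt t ht.1).le) ⟨hab, le_rfl⟩
    have : c * (b - a) = y a - ε := by simp only [b]; field_simp; ring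
    linarith [hgt b hab]
  filter_upwards [eventually_ge_atTop t₁] with t ht
  exact image_le_of_deriv_right_lt_deriv_boundary (a := t₁)
    (hcont.mono fun s hs => ht₁.trans hs.1)
    (fun s hs => hderiv s (ht₁.trans hs.1)) hyt₁ (fun _ => hasDerivAt_const _ ε)
    (fun s hs hys => ((ha s (ht₁.trans hs.1)).2 hys.ge).trans_lt (neg_lt_zero.2 hc))
    ⟨ht, le_rfl⟩

theorem eventually_le_of_hasDerivAt_neg_mul_add {y g : ℝ → ℝ} {lam ε b : ℝ} (hlam : 0 < lam)
    (hy : ∀ᶠ t in atTop, HasDerivAt y (-lam * y t + g t) t)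
    (hg : ∀ᶠ t in atTop, ε ≤ y t → g t ≤ b) (hb : b < lam * ε) :
    ∀ᶠ t in atTop, y t ≤ ε :=
  eventually_le_of_hasDerivAt_le_neg (sub_pos.2 hb) hy <| hg.mono fun t hgt hyt => by
    nlinarith [hgt hyt]

theorem tendsto_zero_of_hasDerivAt_neg_mul_add_of_bound {y g : ℝ → ℝ} {lam : ℝ} (hlam : 0 < lam)
    (hy : ∀ᶠ t in atTop, HasDerivAt y (-lam * y t + g t) t)
    (hg : ∀ ε > 0, ∃ b < lam * ε,
      ∀ᶠ t in atTop, (ε ≤ y t → g t ≤ b) ∧ (ε ≤ -y t → -g t ≤ b)) :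
    Tendsto y atTop (𝓝 0) := by
  refine Metric.nhds_basis_closedBall.tendsto_right_iff.2 fun ε hε => ?_
  obtain ⟨b, hb, hgb⟩ := hg ε hε
  have hy' : ∀ᶠ t in atTop, HasDerivAt (-y) (-lam * (-y) t + (-g) t) t :=
    hy.mono fun t h => h.neg.congr_deriv (by simp; ring)
  filter_upwards [eventually_le_of_hasDerivAt_neg_mul_add hlam hy (hgb.mono fun _ h => h.1) hb,
    eventually_le_of_hasDerivAt_neg_mul_add hlam hy' (hgb.mono fun _ h => h.2) hb] with t h₁ h₂
  simpa [abs_le] using ⟨neg_le.1 h₂, h₁⟩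

theorem tendsto_zero_of_hasDerivAt_neg_mul_add {y g : ℝ → ℝ} {lam : ℝ} (hlam : 0 < lam)
    (hy : ∀ᶠ t in atTop, HasDerivAt y (-lam * y t + g t) t) (hg : Tendsto g atTop (𝓝 0)) :
    Tendsto y atTop (𝓝 0) := by
  refine tendsto_zero_of_hasDerivAt_neg_mul_add_of_bound hlam hy fun ε hε =>
    ⟨lam * ε / 2, by linarith [mul_pos hlam hε], ?_⟩
  have hb : 0 < lam * ε / 2 := by positivity
  filter_upwards [hg.eventually_lt_const hb, hg.eventually_const_lt (neg_lt_zero.2 hb)]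
    with t h₁ h₂
  exact ⟨fun _ => h₁.le, fun _ => by linarith⟩

theorem tendsto_zero_of_hasDerivAt_neg_mul_add_of_mul_nonpos {y g : ℝ → ℝ} {lam : ℝ}
    (hlam : 0 < lam) (hy : ∀ᶠ t in atTop, HasDerivAt y (-lam * y t + g t) t)
    (hyg : ∀ᶠ t in atTop, y t * g t ≤ 0) : Tendsto y atTop (𝓝 0) := by
  refine tendsto_zero_of_hasDerivAt_neg_mul_add_of_bound hlam hy fun ε hε =>
    ⟨0, mul_pos hlam hε, hyg.mono fun t h => ⟨fun hyt => ?_, fun hyt => ?_⟩⟩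
  · exact nonpos_of_mul_nonpos_right h (hε.trans_le hyt)
  · exact nonpos_of_mul_nonpos_right (by rwa [neg_mul_neg]) (hε.trans_le hyt)

theorem IsPreconnected.mul_pos_of_ne_zero {α : Type*} [TopologicalSpace α] {s : Set α}
    {y : α → ℝ} (hs : IsPreconnected s) (hy : ContinuousOn y s) (h0 : ∀ t ∈ s, y t ≠ 0)
    {a b : α} (ha : a ∈ s) (hb : b ∈ s) : 0 < y a * y b := by
  by_contra! hab
  rcases mul_nonpos_iff.1 hab with ⟨hya, hyb⟩ | ⟨hya, hyb⟩
  · obtain ⟨t, ht, hyt⟩ := hs.intermediate_value hb ha hy ⟨hyb, hya⟩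
    exact h0 t ht hyt
  · obtain ⟨t, ht, hyt⟩ := hs.intermediate_value ha hb hy ⟨hya, hyb⟩
    exact h0 t ht hyt

theorem mul_neg_of_mul_neg_of_mul_pos {α : Type*} [CommRing α] [LinearOrder α]
    [IsStrictOrderedRing α] {u v w : α} (huv : u * v < 0) (hvw : 0 < v * w) : u * w < 0 := by
  have hv : 0 < v * v := mul_self_pos.2 (left_ne_zero_of_mul hvw.ne')
  refine neg_of_mul_neg_left ?_ hv.le
  calc u * w * (v * v) = u * v * (v * w) := by ring
    _ < 0 := mul_neg_of_neg_of_pos huv hvw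

theorem mul_pos_of_mul_pos_of_mul_pos {α : Type*} [CommRing α] [LinearOrder α]
    [IsStrictOrderedRing α] {u v w : α} (huv : 0 < u * v) (hvw : 0 < v * w) : 0 < u * w := by
  have hv : 0 < v * v := mul_self_pos.2 (left_ne_zero_of_mul hvw.ne')
  refine pos_of_mul_pos_left ?_ hv.le
  calc 0 < u * v * (v * w) := mul_pos huv hvw
    _ = u * w * (v * v) := by ring

theorem ContinuousAt.apply_zero_eq_zero_of_mul_pos {f : ℝ → ℝ} (hf : ContinuousAt f 0)
    (h : ∀ y ≠ 0, 0 < y * f y) : f 0 = 0 := by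
  refine le_antisymm (le_of_tendsto (hf.tendsto.mono_left (nhdsWithin_le_nhds (s := Iio 0))) ?_)
    (ge_of_tendsto (hf.tendsto.mono_left (nhdsWithin_le_nhds (s := Ioi 0))) ?_)
  · exact eventually_nhdsWithin_of_forall fun y hy =>
      nonpos_of_mul_nonneg_right (h y hy.ne).le hy
  · exact eventually_nhdsWithin_of_forall fun y hy =>
      nonneg_of_mul_nonneg_right (h y hy.ne').le hy

theorem ContinuousAt.apply_zero_eq_zero_of_mul_neg {f : ℝ → ℝ} (hf : ContinuousAt f 0)
    (h : ∀ y ≠ 0, y * f y < 0) : f 0 = 0 :=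
  neg_eq_zero.1 <| hf.neg.apply_zero_eq_zero_of_mul_pos fun y hy => by
    simpa using h y hy

theorem forall_lt_of_exists_of_cyclic_descent {n : ℕ} {P : ℕ → Prop}
    (hstep : ∀ j, j + 1 < n → P (j + 1) → P j) (hwrap : P 0 → P (n - 1)) (h : ∃ j < n, P j) :
    ∀ j < n, P j := by
  have hdown : ∀ i j, i ≤ j → j < n → P j → P i := by
    intro i j hij
    induction j, hij using Nat.le_induction with
    | base => exact fun _ h => h
    | succ j _ ih => exact fun hj h => ih (by omega) (hstep j hj h)
  obtain ⟨j₀, hj₀, h₀⟩ := h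
  exact fun j hj => hdown j (n - 1) (by omega) (by omega) (hwrap (hdown 0 j₀ j₀.zero_le hj₀ h₀))

namespace IsCyclicSolution

variable {n : ℕ} {lam : ℕ → ℝ} {τ T₀ : ℝ} {f : ℕ → ℝ → ℝ} {x : ℕ → ℝ → ℝ}

theorem eventually_hasDerivAt (hx : IsCyclicSolution n lam τ f T₀ x) {j : ℕ} (hj : j + 1 < n) :
    ∀ᶠ t in atTop, HasDerivAt (x j) (-lam j * x j t + f j (x (j + 1) t)) t :=
  (eventually_gt_atTop T₀).mono fun t ht => (hx.2.2 t ht).1 j hj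

theorem eventually_hasDerivAt_last (hx : IsCyclicSolution n lam τ f T₀ x) :
    ∀ᶠ t in atTop,
      HasDerivAt (x (n - 1)) (-lam (n - 1) * x (n - 1) t + f (n - 1) (x 0 (t - τ))) t :=
  (eventually_gt_atTop T₀).mono fun t ht => (hx.2.2 t ht).2

theorem tendsto_zero_of_tendsto_zero_succ (hx : IsCyclicSolution n lam τ f T₀ x) {j : ℕ}
    (hj : j + 1 < n) (hlam : 0 < lam j) (hf : Tendsto (f j) (𝓝 0) (𝓝 0))
    (hsucc : Tendsto (x (j + 1)) atTop (𝓝 0)) : Tendsto (x j) atTop (𝓝 0) :=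
  tendsto_zero_of_hasDerivAt_neg_mul_add hlam (hx.eventually_hasDerivAt hj) (hf.comp hsucc)

theorem tendsto_zero_last_of_tendsto_zero_first (hx : IsCyclicSolution n lam τ f T₀ x)
    (hlam : 0 < lam (n - 1)) (hf : Tendsto (f (n - 1)) (𝓝 0) (𝓝 0))
    (h0 : Tendsto (x 0) atTop (𝓝 0)) : Tendsto (x (n - 1)) atTop (𝓝 0) :=
  tendsto_zero_of_hasDerivAt_neg_mul_add hlam hx.eventually_hasDerivAt_last
    (hf.comp (h0.comp (tendsto_atTop_add_const_right _ (-τ) tendsto_id)))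

theorem exists_tendsto_zero (hx : IsCyclicSolution n lam τ f T₀ x) (hn : 0 < n)
    (hlam : ∀ j < n, 0 < lam j) (hpos : ∀ j < n - 1, ∀ y : ℝ, y ≠ 0 → 0 < y * f j y)
    (hneg : ∀ y : ℝ, y ≠ 0 → y * f (n - 1) y < 0) {T : ℝ} (hT : T₀ ≤ T)
    (hnz : ∀ j < n, ∀ t : ℝ, T ≤ t → x j t ≠ 0) :
    ∃ j < n, Tendsto (x j) atTop (𝓝 0) := by
  have hsign : ∀ j < n, ∀ t ≥ T, 0 < x j t * x j T := fun j hj t ht =>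
    isPreconnected_Ici.mul_pos_of_ne_zero ((hx.2.1 j hj).mono (Ici_subset_Ici.2 hT))
      (hnz j hj) ht self_mem_Ici
  by_cases hopp : ∃ j, j + 1 < n ∧ x j T * x (j + 1) T < 0
  · obtain ⟨j, hj, hjT⟩ := hopp
    refine ⟨j, by omega, tendsto_zero_of_hasDerivAt_neg_mul_add_of_mul_nonpos (hlam j (by omega))
      (hx.eventually_hasDerivAt hj) ?_⟩
    filter_upwards [eventually_ge_atTop T] with t ht
    have hxx : x j t * x (j + 1) t < 0 := by
      nlinarith [hsign j (by omega) t ht, hsign (j + 1) hj t ht]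
    exact (mul_neg_of_mul_neg_of_mul_pos hxx (hpos j (by omega) _ (hnz _ hj t ht))).le
  · push Not at hopp
    have hsame : ∀ j < n, 0 < x 0 T * x j T := by
      intro j
      induction j with
      | zero => exact fun _ => mul_self_pos.2 (hnz 0 hn T le_rfl)
      | succ j ih =>
        intro hj
        have hj' : 0 < x j T * x (j + 1) T :=
          (hopp j hj).lt_of_ne' (mul_ne_zero (hnz j (by omega) T le_rfl) (hnz _ hj T le_rfl))
        exact mul_pos_of_mul_pos_of_mul_pos (ih (by omega)) hj'
    refine ⟨n - 1, by omega, tendsto_zero_of_hasDerivAt_neg_mul_add_of_mul_nonpos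
      (hlam _ (by omega)) hx.eventually_hasDerivAt_last ?_⟩
    filter_upwards [eventually_ge_atTop T, eventually_ge_atTop (T + τ)] with t ht htτ
    have hxx : 0 < x 0 (t - τ) * x (n - 1) t := by
      nlinarith [hsign 0 hn (t - τ) (by linarith), hsign (n - 1) (by omega) t ht,
        hsame (n - 1) (by omega)]
    have hf := hneg _ (hnz 0 hn (t - τ) (by linarith))
    rw [mul_comm] at hf ⊢
    exact (mul_neg_of_mul_neg_of_mul_pos hf hxx).le

end IsCyclicSolution

theorem nonoscillating_solution_tends_to_zero_general
    (n : ℕ) (hn : 0 < n) (lam : ℕ → ℝ) (hlam : ∀ j < n, 0 < lam j)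
    (τ : ℝ) (f : ℕ → ℝ → ℝ) (hf : ∀ j < n, Continuous (f j))
    (hpos : ∀ j < n - 1, ∀ y : ℝ, y ≠ 0 → 0 < y * f j y)
    (hneg : ∀ y : ℝ, y ≠ 0 → y * f (n - 1) y < 0)
    (x : ℕ → ℝ → ℝ) (hx : IsCyclicSolution n lam τ f 0 x)
    (T : ℝ) (hT : 0 ≤ T)
    (hnz : ∀ j < n, ∀ t : ℝ, T ≤ t → x j t ≠ 0) :
    ∀ j < n, Filter.Tendsto (x j) Filter.atTop (nhds 0) := by
  have hf0 : ∀ j < n, Tendsto (f j) (𝓝 0) (𝓝 0) := fun j hj => by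
    have hcont := (hf j hj).continuousAt (x := 0)
    obtain hj' | rfl := (Nat.le_sub_one_of_lt hj).lt_or_eq
    · simpa [hcont.apply_zero_eq_zero_of_mul_pos (hpos j hj')] using hcont.tendsto
    · simpa [hcont.apply_zero_eq_zero_of_mul_neg hneg] using hcont.tendsto
  refine forall_lt_of_exists_of_cyclic_descent (P := fun j => Tendsto (x j) atTop (𝓝 0))
    (fun j hj => hx.tendsto_zero_of_tendsto_zero_succ hj (hlam j (by omega)) (hf0 j (by omega)))
    (hx.tendsto_zero_last_of_tendsto_zero_first (hlam _ (by omega)) (hf0 _ (by omega)))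
    (hx.exists_tendsto_zero hn hlam hpos hneg hT hnz)

/-- Corollary 3: all components of any non-oscillating solution of the cyclic
system converge to zero as `t → ∞`. -/
theorem nonoscillating_solution_tends_to_zero
    (n : ℕ) (hn : 0 < n) (lam : ℕ → ℝ) (hlam : ∀ j < n, 0 < lam j)
    (τ : ℝ) (hτ : 0 < τ) (f : ℕ → ℝ → ℝ) (hf : ∀ j < n, Continuous (f j))
    (hpos : ∀ j < n - 1, ∀ y : ℝ, y ≠ 0 → 0 < y * f j y)
    (hneg : ∀ y : ℝ, y ≠ 0 → y * f (n - 1) y < 0)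
    (x : ℕ → ℝ → ℝ) (hx : IsCyclicSolution n lam τ f 0 x)
    (T : ℝ) (hT : 0 ≤ T)
    (hnz : ∀ j < n, ∀ t : ℝ, T ≤ t → x j t ≠ 0) :
    ∀ j < n, Filter.Tendsto (x j) Filter.atTop (nhds 0) :=
  nonoscillating_solution_tends_to_zero_general n hn lam hlam τ f hf hpos hneg x hx T hT hnz
end

section
/- Let ε > 0, let b : [t_0,∞) → ℝ be differentiable with b′(t) < 0 for all t ≥ t_0 and with finite limit b_* = lim_{t→∞} b(t), and let u : [t_0,∞) → ℝ be differentiable and satisfy ε·u′(t) = −u(t) + b(t) for all t ≥ t_0. Then u is eventually strictly monotone with |u′(t)| > 0 for all sufficiently large t, with the following specification: (i) if u(t_0) ≥ b(t_0) then u(t) > b(t) and u′(t) < 0 for all t > t_0; (ii) if b_* ≤ u(t_0) < b(t_0) then there exists T > t_0 such that u is strictly increasing on [t_0,T] and strictly decreasing on [T,∞), and moreover u(t) > b(t) and u′(t) < 0 for all t > T; (iii) if u(t_0) < b_* then either u′(t) > 0 for all t ≥ t_0, or there exists a finite t_1 > t_0 with u(t_1) = b_* and then u(t) > b(t), u′(t)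 < 0 for all sufficiently large t. -/
/-!
The integrating factor turns the equation into
`d/dt (exp (t/ε) * (u t - b t)) = -exp (t/ε) * b' t > 0`, so the weighted gap
`exp (t/ε) * (u t - b t)` is strictly increasing. Hence once `u` reaches `b` it stays strictly
above it, and since `ε u' = b - u`, the sign of `u'` is the sign of `b - u`. Either `u < b`
forever, and `u` increases, or `u` crosses `b` exactly once and decreases afterwards. When
`b_* ≤ u t₀` the first alternative is impossible, since an increasing `u` would eventually
exceed `b`, which tends to `b_*`; when `u t₀ < b_*` a crossing forces `u = b_*` on the way,
because `b > b_*`.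
-/

open Set Filter Topology Real

section Order

variable {α β : Type*} [LinearOrder α] [TopologicalSpace β] [LinearOrder β] [OrderTopology β]

theorem AntitoneOn.le_of_tendsto_atTop {f : α → β} {a t : α} {l : β} (hf : AntitoneOn f (Ici a))
    (hlim : Tendsto f atTop (𝓝 l)) (ht : a ≤ t) : l ≤ f t :=
  have : Nonempty α := ⟨t⟩
  le_of_tendsto hlim <| (eventually_ge_atTop t).mono fun _ hs => hf ht (ht.trans hs) hs

theorem StrictMonoOn.exists_gt_of_tendsto_atTop [NoMaxOrder α] {u b : α → β} {t₀ : α} {l : β}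
    (hu : StrictMonoOn u (Ici t₀)) (hb : Tendsto b atTop (𝓝 l)) (hl : l ≤ u t₀) :
    ∃ s, t₀ ≤ s ∧ b s < u s := by
  obtain ⟨t₁, ht₁⟩ := exists_gt t₀
  have : Nonempty α := ⟨t₀⟩
  have hlt : l < u t₁ := hl.trans_lt <| hu (mem_Ici.mpr le_rfl) (mem_Ici.mpr ht₁.le) ht₁
  obtain ⟨s, hbs, hs⟩ := ((hb.eventually_lt_const hlt).and (eventually_ge_atTop t₁)).exists
  exact ⟨s, ht₁.le.trans hs, hbs.trans_le <| hu.monotoneOn (mem_Ici.mpr ht₁.le)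
    (mem_Ici.mpr (ht₁.le.trans hs)) hs⟩

end Order

namespace ForcedRelaxation

variable {ε t₀ : ℝ} {b u : ℝ → ℝ}

theorem le_of_tendsto_of_deriv_neg {l t : ℝ} (hbdiff : ∀ t, t₀ ≤ t → DifferentiableAt ℝ b t)
    (hb' : ∀ t, t₀ ≤ t → deriv b t < 0) (hblim : Tendsto b atTop (𝓝 l)) (ht : t₀ ≤ t) :
    l ≤ b t := by
  have hanti : AntitoneOn b (Ici t₀) := (strictAntiOn_of_deriv_neg (convex_Ici t₀)
    (fun t ht => (hbdiff t ht).continuousAt.continuousWithinAt)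
    fun t ht => hb' t (interior_subset ht)).antitoneOn
  exact hanti.le_of_tendsto_atTop hblim ht

noncomputable def weightedGap (ε : ℝ) (u b : ℝ → ℝ) (t : ℝ) : ℝ :=
  exp (t / ε) * (u t - b t)

theorem weightedGap_pos_iff {t : ℝ} : 0 < weightedGap ε u b t ↔ b t < u t := by
  rw [weightedGap, mul_pos_iff_of_pos_left (exp_pos _), sub_pos]

theorem weightedGap_nonneg_iff {t : ℝ} : 0 ≤ weightedGap ε u b t ↔ b t ≤ u t := by
  rw [weightedGap, mul_nonneg_iff_of_pos_left (exp_pos _), sub_nonneg]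

theorem weightedGap_neg_iff {t : ℝ} : weightedGap ε u b t < 0 ↔ u t < b t := by
  rw [← not_le, weightedGap_nonneg_iff, not_le]

theorem hasDerivAt_weightedGap {t b' : ℝ} (hu : HasDerivAt u ((-u t + b t) / ε) t)
    (hb : HasDerivAt b b' t) : HasDerivAt (weightedGap ε u b) (exp (t / ε) * -b') t := by
  have hexp : HasDerivAt (fun s => exp (s / ε)) (exp (t / ε) * (1 / ε)) t :=
    (hasDerivAt_id t).div_const ε |>.exp
  exact (hexp.mul (hu.sub hb)).congr_deriv (by simp only [Pi.sub_apply]; ring)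

theorem strictMonoOn_weightedGap (hbdiff : ∀ t, t₀ ≤ t → DifferentiableAt ℝ b t)
    (hb' : ∀ t, t₀ ≤ t → deriv b t < 0)
    (hu : ∀ t, t₀ ≤ t → HasDerivAt u ((-u t + b t) / ε) t) :
    StrictMonoOn (weightedGap ε u b) (Ici t₀) := by
  have hderiv : ∀ t, t₀ ≤ t → HasDerivAt (weightedGap ε u b) (exp (t / ε) * -deriv b t) t :=
    fun t ht => hasDerivAt_weightedGap (hu t ht) (hbdiff t ht).hasDerivAt
  refine strictMonoOn_of_deriv_pos (convex_Ici t₀)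
    (fun t ht => (hderiv t ht).continuousAt.continuousWithinAt) fun t ht => ?_
  rw [interior_Ici] at ht
  rw [(hderiv t ht.le).deriv]
  exact mul_pos (exp_pos _) (neg_pos.mpr (hb' t ht.le))

theorem deriv_neg_of_lt (hε : 0 < ε) {t : ℝ} (hu : HasDerivAt u ((-u t + b t) / ε) t)
    (h : b t < u t) : deriv u t < 0 := by
  rw [hu.deriv]
  exact div_neg_of_neg_of_pos (by linarith) hε

theorem deriv_pos_of_lt (hε : 0 < ε) {t : ℝ} (hu : HasDerivAt u ((-u t + b t) / ε) t)
    (h : u t < b t) : 0 < deriv u t := by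
  rw [hu.deriv]
  exact div_pos (by linarith) hε

theorem strictMonoOn_of_lt (hε : 0 < ε)
    (hu : ∀ t, t₀ ≤ t → HasDerivAt u ((-u t + b t) / ε) t) {D : Set ℝ} (hD : Convex ℝ D)
    (hDt₀ : D ⊆ Ici t₀) (hlt : ∀ t ∈ interior D, u t < b t) : StrictMonoOn u D :=
  strictMonoOn_of_deriv_pos hD (fun t ht => (hu t (hDt₀ ht)).continuousAt.continuousWithinAt)
    fun t ht => deriv_pos_of_lt hε (hu t (hDt₀ (interior_subset ht))) (hlt t ht)

theorem lt_and_deriv_neg_of_le (hε : 0 < ε) (hbdiff : ∀ t, t₀ ≤ t → DifferentiableAt ℝ b t)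
    (hb' : ∀ t, t₀ ≤ t → deriv b t < 0)
    (hu : ∀ t, t₀ ≤ t → HasDerivAt u ((-u t + b t) / ε) t) {s t : ℝ} (hs : t₀ ≤ s)
    (hbs : b s ≤ u s) (hst : s < t) : b t < u t ∧ deriv u t < 0 := by
  have hlt : b t < u t := weightedGap_pos_iff.mp <| (weightedGap_nonneg_iff.mpr hbs).trans_lt <|
    strictMonoOn_weightedGap hbdiff hb' hu hs (hs.trans hst.le) hst
  exact ⟨hlt, deriv_neg_of_lt hε (hu t (hs.trans hst.le)) hlt⟩

theorem strictAntiOn_Ici_of_le (hε : 0 < ε) (hbdiff : ∀ t, t₀ ≤ t → DifferentiableAt ℝ b t)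
    (hb' : ∀ t, t₀ ≤ t → deriv b t < 0)
    (hu : ∀ t, t₀ ≤ t → HasDerivAt u ((-u t + b t) / ε) t) {s T : ℝ} (hs : t₀ ≤ s)
    (hbs : b s ≤ u s) (hsT : s ≤ T) : StrictAntiOn u (Ici T) := by
  refine strictAntiOn_of_deriv_neg (convex_Ici T)
    (fun t ht => (hu t (hs.trans (hsT.trans ht))).continuousAt.continuousWithinAt) fun t ht => ?_
  rw [interior_Ici, mem_Ioi] at ht
  exact (lt_and_deriv_neg_of_le hε hbdiff hb' hu hs hbs (hsT.trans_lt ht)).2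

theorem exists_crossing (hbdiff : ∀ t, t₀ ≤ t → DifferentiableAt ℝ b t)
    (hb' : ∀ t, t₀ ≤ t → deriv b t < 0)
    (hu : ∀ t, t₀ ≤ t → HasDerivAt u ((-u t + b t) / ε) t) (h₀ : u t₀ < b t₀) {s : ℝ}
    (hs : t₀ ≤ s) (hbs : b s ≤ u s) :
    ∃ T, t₀ < T ∧ u T = b T ∧ ∀ t ∈ Ico t₀ T, u t < b t := by
  have hmono := strictMonoOn_weightedGap hbdiff hb' hu
  have hcont : ContinuousOn (weightedGap ε u b) (Icc t₀ s) := fun t ht =>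
    (hasDerivAt_weightedGap (hu t ht.1) (hbdiff t ht.1).hasDerivAt).continuousAt.continuousWithinAt
  obtain ⟨T, ⟨hT₀, -⟩, hT⟩ := intermediate_value_Ioc hs hcont
    ⟨weightedGap_neg_iff.mpr h₀, weightedGap_nonneg_iff.mpr hbs⟩
  refine ⟨T, hT₀, ?_, fun t ⟨ht₀, htT⟩ => weightedGap_neg_iff (ε := ε).mp ?_⟩
  · simpa [weightedGap, (exp_pos _).ne', sub_eq_zero] using hT
  · exact hT ▸ hmono ht₀ hT₀.le htT

end ForcedRelaxation

open ForcedRelaxation in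
/-- Proposition 4: if `ε u'(t) = -u(t) + b(t)` with `ε > 0` and `b` differentiable,
strictly decreasing (`b' < 0`) with finite limit `b_*` at infinity, then `u` is
eventually strictly monotone with nonvanishing derivative, and:
(i) `u(t₀) ≥ b(t₀)` implies `u(t) > b(t)` and `u'(t) < 0` for all `t > t₀`;
(ii) `b_* ≤ u(t₀) < b(t₀)` implies `u` strictly increases on `[t₀,T]`, strictly
decreases on `[T,∞)` and `u(t) > b(t)`, `u'(t) < 0` for `t > T`, for some `T > t₀`;
(iii) `u(t₀) < b_*` implies either `u' > 0` on `[t₀,∞)`, or there is a finite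
`t₁ > t₀` with `u(t₁) = b_*` and then `u(t) > b(t)`, `u'(t) < 0` eventually. -/
theorem eventually_strict_monotone_decreasing_forcing
    (ε t₀ bstar : ℝ) (hε : 0 < ε)
    (b u : ℝ → ℝ)
    (hbdiff : ∀ t : ℝ, t₀ ≤ t → DifferentiableAt ℝ b t)
    (hb' : ∀ t : ℝ, t₀ ≤ t → deriv b t < 0)
    (hblim : Filter.Tendsto b Filter.atTop (nhds bstar))
    (hu : ∀ t : ℝ, t₀ ≤ t → HasDerivAt u ((-u t + b t) / ε) t) :
    (∃ T : ℝ, t₀ ≤ T ∧ (∀ t : ℝ, T ≤ t → deriv u t ≠ 0) ∧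
      (StrictMonoOn u (Set.Ici T) ∨ StrictAntiOn u (Set.Ici T))) ∧
    (b t₀ ≤ u t₀ → ∀ t : ℝ, t₀ < t → b t < u t ∧ deriv u t < 0) ∧
    (bstar ≤ u t₀ → u t₀ < b t₀ →
      ∃ T : ℝ, t₀ < T ∧ StrictMonoOn u (Set.Icc t₀ T) ∧ StrictAntiOn u (Set.Ici T) ∧
        ∀ t : ℝ, T < t → b t < u t ∧ deriv u t < 0) ∧
    (u t₀ < bstar →
      (∀ t : ℝ, t₀ ≤ t → 0 < deriv u t) ∨
      (∃ t₁ : ℝ, t₀ < t₁ ∧ u t₁ = bstar ∧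
        ∃ T : ℝ, t₀ ≤ T ∧ ∀ t : ℝ, T < t → b t < u t ∧ deriv u t < 0)) := by
  have after := @lt_and_deriv_neg_of_le _ _ _ _ hε hbdiff hb' hu
  have anti := @strictAntiOn_Ici_of_le _ _ _ _ hε hbdiff hb' hu
  have mono (hP : ∀ t, t₀ ≤ t → u t < b t) : StrictMonoOn u (Ici t₀) :=
    strictMonoOn_of_lt hε hu (convex_Ici t₀) subset_rfl fun t ht => hP t (interior_subset ht)
  refine ⟨?_, fun h₀ t ht => after le_rfl h₀ ht, fun hstar h₀ => ?_, fun hstar => ?_⟩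
  · by_cases hP : ∃ s, t₀ ≤ s ∧ b s ≤ u s
    · obtain ⟨s, hs, hbs⟩ := hP
      exact ⟨s + 1, by linarith, fun t ht => (after hs hbs (by linarith)).2.ne,
        Or.inr (anti hs hbs (by linarith))⟩
    · push Not at hP
      exact ⟨t₀, le_rfl, fun t ht => (deriv_pos_of_lt hε (hu t ht) (hP t ht)).ne', Or.inl (mono hP)⟩
  · obtain ⟨s, hs, hbs⟩ : ∃ s, t₀ ≤ s ∧ b s ≤ u s := by
      by_contra! hP
      obtain ⟨s, hs, hbs⟩ := (mono hP).exists_gt_of_tendsto_atTop hblim hstar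
      exact (hP s hs).asymm hbs
    obtain ⟨T, hT₀, hT, hbefore⟩ := exists_crossing hbdiff hb' hu h₀ hs hbs
    refine ⟨T, hT₀, ?_, anti hT₀.le hT.ge le_rfl, fun t ht => after hT₀.le hT.ge ht⟩
    refine strictMonoOn_of_lt hε hu (convex_Icc t₀ T) Icc_subset_Ici_self fun t ht => ?_
    rw [interior_Icc] at ht
    exact hbefore t (Ioo_subset_Ico_self ht)
  · by_cases hP : ∃ s, t₀ ≤ s ∧ b s ≤ u s
    · obtain ⟨s, hs, hbs⟩ := hP
      have hstar_le : bstar ≤ u s := (le_of_tendsto_of_deriv_neg hbdiff hb' hblim hs).trans hbs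
      obtain ⟨t₁, ⟨ht₁, -⟩, hut₁⟩ := intermediate_value_Ioc hs
        (fun t ht => (hu t ht.1).continuousAt.continuousWithinAt) ⟨hstar, hstar_le⟩
      exact Or.inr ⟨t₁, ht₁, hut₁, s, hs, fun t ht => after hs hbs ht⟩
    · push Not at hP
      exact Or.inl fun t ht => deriv_pos_of_lt hε (hu t ht) (hP t ht)
end

section
/- Let n be a positive integer, λ_1,…,λ_n positive reals, τ > 0, and f_1,…,f_n : ℝ → ℝ continuous, with f_j satisfying positive feedback for 1 ≤ j ≤ n−1 and f_n satisfying negative feedback, and with each f_j continuously differentiable in a neighborhood of 0 with f_j′(0) ≠ 0. Then the cyclic system has no small non-oscillating solutions: if x = (x_1,…,x_n) is a solution for which there exists T ≥ 0 with x_j(t) ≠ 0 for all j and all t ≥ T (non-oscillating), then x is not a small solution, i.e., there exists λ > 0 such that x(t)·e^{λt} does not converge to 0 as t → ∞. -/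
open Set Filter Topology Asymptotics Real

lemma IsPreconnected.forall_pos_or_forall_neg {X : Type*} [TopologicalSpace X] {s : Set X}
    (hs : IsPreconnected s) {g : X → ℝ} (hg : ContinuousOn g s) (hne : ∀ t ∈ s, g t ≠ 0) :
    (∀ t ∈ s, 0 < g t) ∨ ∀ t ∈ s, g t < 0 := by
  by_contra! h
  obtain ⟨⟨a, ha, hga⟩, b, hb, hgb⟩ := h
  obtain ⟨c, hc, hgc⟩ := hs.intermediate_value ha hb hg ⟨hga, hgb⟩
  exact hne c hc hgc

lemma map_zero_of_forall_mul_pos {f : ℝ → ℝ} (hf : ContinuousAt f 0)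
    (hpos : ∀ y ≠ 0, 0 < y * f y) : f 0 = 0 := by
  have hright : 0 ≤ f 0 :=
    ge_of_tendsto (hf.tendsto.mono_left (nhdsWithin_le_nhds (s := Ioi (0 : ℝ)))) <| by
      filter_upwards [self_mem_nhdsWithin] with y (hy : 0 < y)
      exact ((pos_iff_pos_of_mul_pos (hpos y hy.ne')).1 hy).le
  have hleft : f 0 ≤ 0 :=
    le_of_tendsto (hf.tendsto.mono_left (nhdsWithin_le_nhds (s := Iio (0 : ℝ)))) <| by
      filter_upwards [self_mem_nhdsWithin] with y (hy : y < 0)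
      exact ((neg_iff_neg_of_mul_pos (hpos y hy.ne)).1 hy).le
  exact le_antisymm hleft hright

lemma map_zero_of_forall_mul_neg {f : ℝ → ℝ} (hf : ContinuousAt f 0)
    (hneg : ∀ y ≠ 0, y * f y < 0) : f 0 = 0 :=
  neg_eq_zero.1 <| map_zero_of_forall_mul_pos (f := fun y => -f y) hf.neg
    fun y hy => by simpa only [mul_neg, neg_pos] using hneg y hy

lemma HasDerivAt.exists_pos_eventually_mul_abs_sub_le {f : ℝ → ℝ} {d x : ℝ}
    (hf : HasDerivAt f d x) (hd : d ≠ 0) {α : Type*} {l : Filter α} {v : α → ℝ}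
    (hv : Tendsto v l (𝓝 x)) : ∃ c > 0, ∀ᶠ t in l, c * |v t - x| ≤ |f (v t) - f x| := by
  have hpair : Tendsto (fun y : ℝ => (y, x)) (𝓝 x) (𝓝 x ×ˢ pure x) :=
    tendsto_id.prodMk tendsto_const_pure
  obtain ⟨C, hC, hbound⟩ := ((hf.isTheta_sub hd).isBigO_symm.comp_tendsto hpair).exists_pos
  refine ⟨C⁻¹, inv_pos.2 hC, ?_⟩
  filter_upwards [hv.eventually hbound.bound] with t ht
  rw [inv_mul_le_iff₀ hC]
  simpa only [Function.comp_apply, Real.norm_eq_abs] using ht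

lemma tendsto_mul_exp_zero_iff_abs {g : ℝ → ℝ} {μ : ℝ} :
    Tendsto (fun t => g t * exp (μ * t)) atTop (𝓝 0) ↔
      Tendsto (fun t => |g t| * exp (μ * t)) atTop (𝓝 0) := by
  rw [tendsto_zero_iff_abs_tendsto_zero]
  simp only [Function.comp_def, abs_mul, abs_exp]

lemma tendsto_zero_of_tendsto_mul_exp {g : ℝ → ℝ} {μ : ℝ} (hμ : 0 ≤ μ)
    (h : Tendsto (fun t => g t * exp (μ * t)) atTop (𝓝 0)) : Tendsto g atTop (𝓝 0) := by
  refine squeeze_zero_norm' ?_ (tendsto_mul_exp_zero_iff_abs.1 h)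
  filter_upwards [eventually_ge_atTop 0] with t ht
  rw [Real.norm_eq_abs]
  exact le_mul_of_one_le_right (abs_nonneg _) (one_le_exp (by positivity))

section ScalarEquation

variable {g u : ℝ → ℝ} {lam : ℝ}

lemma hasDerivAt_abs_of_mul_pos {s v : ℝ} (hg : HasDerivAt g (-lam * g s + v) s)
    (hgv : 0 < g s * v) : HasDerivAt (fun r => |g r|) (-lam * |g s| + |v|) s := by
  refine ((hasDerivAt_abs (left_ne_zero_of_mul hgv.ne')).comp s hg).congr_deriv ?_
  rcases lt_or_gt_of_ne (left_ne_zero_of_mul hgv.ne') with h | h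
  · rw [sign_neg h, abs_of_neg h, abs_of_neg ((neg_iff_neg_of_mul_pos hgv).1 h)]
    simp only [SignType.coe_neg, SignType.coe_one]; ring
  · rw [sign_pos h, abs_of_pos h, abs_of_pos ((pos_iff_pos_of_mul_pos hgv).1 h)]
    simp only [SignType.coe_one]; ring

lemma hasDerivAt_abs_of_mul_neg {s v : ℝ} (hg : HasDerivAt g (-lam * g s + v) s)
    (hgv : g s * v < 0) : HasDerivAt (fun r => |g r|) (-lam * |g s| - |v|) s := by
  refine ((hasDerivAt_abs (left_ne_zero_of_mul hgv.ne)).comp s hg).congr_deriv ?_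
  rcases lt_or_gt_of_ne (left_ne_zero_of_mul hgv.ne) with h | h
  · rw [sign_neg h, abs_of_neg h, abs_of_pos (by nlinarith : 0 < v)]
    simp only [SignType.coe_neg, SignType.coe_one]; ring
  · rw [sign_pos h, abs_of_pos h, abs_of_neg (by nlinarith : v < 0)]
    simp only [SignType.coe_one]; ring

lemma not_tendsto_mul_exp_of_mul_pos {a : ℝ} (hcont : ContinuousOn g (Ici a))
    (hg : ∀ s > a, HasDerivAt g (-lam * g s + u s) s) (hgu : ∀ s ∈ Ici a, 0 < g s * u s) :
    ¬ Tendsto (fun t => g t * exp (lam * t)) atTop (𝓝 0) := by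
  set z := fun t => |g t| * exp (lam * t)
  have hz : ∀ s > a, HasDerivAt z (|u s| * exp (lam * s)) s := fun s hs =>
    ((hasDerivAt_abs_of_mul_pos (hg s hs) (hgu s hs.le)).mul
      ((hasDerivAt_id s).const_mul lam).exp).congr_deriv (by simp only [id]; ring)
  have hmono : MonotoneOn z (Ici a) := by
    refine monotoneOn_of_deriv_nonneg (convex_Ici a) (hcont.abs.mul (by fun_prop)) ?_ ?_ <;>
      rw [interior_Ici]
    · exact fun s hs => (hz s hs).differentiableAt.differentiableWithinAt
    · exact fun s hs => (hz s hs).deriv ▸ by positivity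
  have hza : 0 < z a :=
    mul_pos (abs_pos.2 (left_ne_zero_of_mul (hgu a self_mem_Ici).ne')) (exp_pos _)
  intro htend
  obtain ⟨t, hzt, hat⟩ :=
    ((tendsto_mul_exp_zero_iff_abs.1 htend |>.eventually (gt_mem_nhds hza)).and
      (eventually_ge_atTop a)).exists
  exact (hmono self_mem_Ici hat hat).not_gt hzt

lemma antitoneOn_abs_of_mul_neg (hlam : 0 ≤ lam) {a : ℝ} (hcont : ContinuousOn g (Ici a))
    (hg : ∀ s > a, HasDerivAt g (-lam * g s + u s) s) (hgu : ∀ s > a, g s * u s < 0) :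
    AntitoneOn (fun t => |g t|) (Ici a) := by
  refine antitoneOn_of_deriv_nonpos (convex_Ici a) hcont.abs ?_ ?_ <;> rw [interior_Ici]
  · exact fun s hs => (hasDerivAt_abs_of_mul_neg (hg s hs) (hgu s hs)).differentiableAt
      |>.differentiableWithinAt
  · intro s hs
    rw [(hasDerivAt_abs_of_mul_neg (hg s hs) (hgu s hs)).deriv]
    nlinarith [abs_nonneg (g s), abs_nonneg (u s)]

lemma mul_le_abs_of_mul_neg (hlam : 0 ≤ lam) {t h m : ℝ} (hh : 0 ≤ h)
    (hcont : ContinuousOn g (Icc t (t + h)))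
    (hg : ∀ s ∈ Ioo t (t + h), HasDerivAt g (-lam * g s + u s) s)
    (hgu : ∀ s ∈ Ioo t (t + h), g s * u s < 0) (hm : ∀ s ∈ Ioo t (t + h), m ≤ |u s|) :
    h * m ≤ |g t| := by
  have hderiv s (hs : s ∈ Ioo t (t + h)) := hasDerivAt_abs_of_mul_neg (hg s hs) (hgu s hs)
  have hmvt := (convex_Icc t (t + h)).image_sub_le_mul_sub_of_deriv_le hcont.abs
    (fun s hs => by
      rw [interior_Icc] at hs
      exact (hderiv s hs).differentiableAt.differentiableWithinAt)
    (C := -m) (fun s hs => by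
      rw [interior_Icc] at hs
      rw [(hderiv s hs).deriv]
      nlinarith [abs_nonneg (g s), hm s hs])
    t (left_mem_Icc.2 (by linarith)) (t + h) (right_mem_Icc.2 (by linarith)) (by linarith)
  nlinarith [abs_nonneg (g (t + h))]

end ScalarEquation

lemma eventually_prod_mul_le_of_shift {φ : ℕ → ℝ → ℝ} {c : ℕ → ℝ} {h : ℝ} {N : ℕ}
    (hc : ∀ k < N, 0 ≤ c k) (hstep : ∀ k < N, ∀ᶠ t in atTop, c k * φ (k + 1) (t + h) ≤ φ k t) :
    ∀ᶠ t in atTop, (∏ k ∈ Finset.range N, c k) * φ N (t + N * h) ≤ φ 0 t := by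
  induction N with
  | zero => simp
  | succ N ih =>
    have hshift := (tendsto_atTop_add_const_right atTop (N * h) tendsto_id).eventually
      (hstep N N.lt_succ_self)
    filter_upwards [ih (fun k hk => hc k (by omega)) (fun k hk => hstep k (by omega)), hshift]
      with t hN hlast
    have hprod : 0 ≤ ∏ k ∈ Finset.range N, c k :=
      Finset.prod_nonneg fun k hk => hc k (by have := Finset.mem_range.1 hk; omega)
    calc (∏ k ∈ Finset.range (N + 1), c k) * φ (N + 1) (t + ↑(N + 1) * h)
        = (∏ k ∈ Finset.range N, c k) * (c N * φ (N + 1) (t + N * h + h)) := by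
          rw [Finset.prod_range_succ]; push_cast; ring_nf
      _ ≤ (∏ k ∈ Finset.range N, c k) * φ N (t + N * h) := by gcongr; exact hlast
      _ ≤ φ 0 t := hN

lemma exists_not_tendsto_mul_exp_of_le_delay {g : ℝ → ℝ} {K p : ℝ} (hK : 0 < K) (hp : 0 < p)
    (hne : ∀ᶠ t in atTop, g t ≠ 0) (hdelay : ∀ᶠ t in atTop, K * |g (t - p)| ≤ |g t|) :
    ∃ μ > 0, ¬ Tendsto (fun t => g t * exp (μ * t)) atTop (𝓝 0) := by
  obtain ⟨b, hb⟩ := eventually_atTop.1 (hne.and hdelay)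
  set μ := (|log K| + 1) / p
  have hgain : 1 ≤ K * exp (μ * p) := by
    have : -log K ≤ μ * p := by
      rw [div_mul_cancel₀ _ hp.ne']; linarith [neg_le_abs (log K)]
    calc 1 = K * exp (-log K) := by rw [exp_neg, exp_log hK, mul_inv_cancel₀ hK.ne']
      _ ≤ K * exp (μ * p) := by gcongr
  set ψ := fun t => |g t| * exp (μ * t)
  have hstep : ∀ t ≥ b, ψ (t - p) ≤ ψ t := fun t ht => by
    have hexp : exp (μ * t) = exp (μ * (t - p)) * exp (μ * p) := by rw [← exp_add]; ring_nf
    calc ψ (t - p) ≤ ψ (t - p) * (K * exp (μ * p)) :=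
          le_mul_of_one_le_right (by positivity) hgain
      _ = K * |g (t - p)| * exp (μ * t) := by simp only [ψ, hexp]; ring
      _ ≤ ψ t := mul_le_mul_of_nonneg_right (hb t ht).2 (exp_pos _).le
  have hgrid : ∀ m : ℕ, ψ b ≤ ψ (b + m * p) := fun m => by
    induction m with
    | zero => simp
    | succ m ih =>
      have := hstep (b + (m + 1 : ℕ) * p) (by nlinarith [m.cast_nonneg (α := ℝ)])
      rw [show b + ((m + 1 : ℕ) : ℝ) * p - p = b + m * p by push_cast; ring] at this
      exact ih.trans this
  have hψb : 0 < ψ b := mul_pos (abs_pos.2 (hb b le_rfl).1) (exp_pos _)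
  refine ⟨μ, by positivity, fun htend => ?_⟩
  have hgrid_tendsto : Tendsto (fun m : ℕ => b + m * p) atTop atTop :=
    tendsto_atTop_add_const_left _ _ (tendsto_natCast_atTop_atTop.atTop_mul_const hp)
  obtain ⟨m, hm⟩ := ((tendsto_mul_exp_zero_iff_abs.1 htend).comp hgrid_tendsto |>.eventually
    (gt_mem_nhds hψb)).exists
  exact (hgrid m).not_gt hm

/-- The components `x 0, …, x (n - 1)` followed by `x n t := x 0 (t - τ)`, so that the `j`-th
equation of the cyclic system reads `x j' = -lam j * x j + f j (x (j + 1))` for every `j < n`. -/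
def cyclicExtension (n : ℕ) (τ : ℝ) (x : ℕ → ℝ → ℝ) (k : ℕ) (t : ℝ) : ℝ :=
  if k < n then x k t else x 0 (t - τ)

section CyclicSystem

variable {n : ℕ} {lam : ℕ → ℝ} {τ : ℝ} {f : ℕ → ℝ → ℝ} {T : ℝ} {x : ℕ → ℝ → ℝ}

lemma cyclicExtension_of_lt {k : ℕ} (hk : k < n) : cyclicExtension n τ x k = x k := by
  ext t
  simp [cyclicExtension, hk]

lemma cyclicExtension_self : cyclicExtension n τ x n = fun t => x 0 (t - τ) := by
  ext t
  simp [cyclicExtension]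

lemma cyclicExtension_ne_zero (hn : 0 < n) (hτ : 0 ≤ τ) {b : ℝ}
    (hx : ∀ s ≥ b, ∀ j < n, x j s ≠ 0) {k : ℕ} {t : ℝ} (ht : b + τ ≤ t) :
    cyclicExtension n τ x k t ≠ 0 := by
  unfold cyclicExtension
  split_ifs with hk
  · exact hx t (by linarith) k hk
  · exact hx (t - τ) (by linarith) 0 hn

lemma tendsto_cyclicExtension (hn : 0 < n) (hx : ∀ j < n, Tendsto (x j) atTop (𝓝 0))
    {k : ℕ} (hk : k ≤ n) : Tendsto (cyclicExtension n τ x k) atTop (𝓝 0) := by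
  rcases hk.lt_or_eq with hk | rfl
  · rw [cyclicExtension_of_lt hk]
    exact hx k hk
  · rw [cyclicExtension_self]
    exact (hx 0 hn).comp (tendsto_atTop_add_const_right _ _ tendsto_id)

namespace IsCyclicSolution

lemma hasDerivAt (hx : IsCyclicSolution n lam τ f T x) {j : ℕ} (hj : j < n) {t : ℝ}
    (ht : T < t) :
    HasDerivAt (x j) (-lam j * x j t + f j (cyclicExtension n τ x (j + 1) t)) t := by
  by_cases hj' : j + 1 < n
  · simpa [cyclicExtension, hj'] using (hx.2.2 t ht).1 j hj'
  · obtain rfl : j = n - 1 := by omega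
    simpa [cyclicExtension, hj'] using (hx.2.2 t ht).2

lemma continuousOn_cyclicExtension (hx : IsCyclicSolution n lam τ f T x) {k : ℕ} (hk : k ≤ n) :
    ContinuousOn (cyclicExtension n τ x k) (Ici T) := by
  rcases hk.lt_or_eq with hk | rfl
  · rw [cyclicExtension_of_lt hk]
    exact hx.2.1 k hk
  · rw [cyclicExtension_self]
    exact hx.1.comp (continuous_sub_right τ).continuousOn fun t (ht : T ≤ t) =>
      show T - τ ≤ t - τ by linarith

lemma forall_mul_pos_or_forall_mul_neg (hx : IsCyclicSolution n lam τ f T x)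
    (hf : ∀ j < n, Continuous (f j)) (hfne : ∀ j < n, ∀ y ≠ 0, f j y ≠ 0) {a : ℝ} (ha : T ≤ a)
    (hnz : ∀ k ≤ n, ∀ t ∈ Ici a, cyclicExtension n τ x k t ≠ 0) {j : ℕ} (hj : j < n) :
    (∀ t ∈ Ici a, 0 < x j t * f j (cyclicExtension n τ x (j + 1) t)) ∨
      ∀ t ∈ Ici a, x j t * f j (cyclicExtension n τ x (j + 1) t) < 0 := by
  refine isPreconnected_Ici.forall_pos_or_forall_neg ?_ fun t ht => ?_
  · exact ((hx.2.1 j hj).mul ((hf j hj).comp_continuousOn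
      (hx.continuousOn_cyclicExtension hj))).mono (Ici_subset_Ici.2 ha)
  · have hxj := hnz j hj.le t ht
    rw [cyclicExtension_of_lt hj] at hxj
    exact mul_ne_zero hxj (hfne j hj _ (hnz (j + 1) hj t ht))

lemma antitoneOn_abs_cyclicExtension (hx : IsCyclicSolution n lam τ f T x) (hn : 0 < n)
    (hτ : 0 ≤ τ) (hlam : ∀ j < n, 0 ≤ lam j) {a : ℝ} (ha : T ≤ a)
    (hneg : ∀ j < n, ∀ t ∈ Ici a, x j t * f j (cyclicExtension n τ x (j + 1) t) < 0)
    {k : ℕ} (hk : k ≤ n) : AntitoneOn (fun t => |cyclicExtension n τ x k t|) (Ici (a + τ)) := by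
  have hanti : ∀ j < n, AntitoneOn (fun t => |x j t|) (Ici a) := fun j hj =>
    antitoneOn_abs_of_mul_neg (hlam j hj) ((hx.2.1 j hj).mono (Ici_subset_Ici.2 ha))
      (fun s hs => hx.hasDerivAt hj (ha.trans_lt hs)) fun s hs => hneg j hj s hs.le
  rcases hk.lt_or_eq with hk | rfl
  · rw [cyclicExtension_of_lt hk]
    exact (hanti k hk).mono (Ici_subset_Ici.2 (by linarith))
  · rw [cyclicExtension_self]
    intro s (hs : a + τ ≤ s) t (ht : a + τ ≤ t) hst
    exact hanti 0 hn (show a ≤ s - τ by linarith) (show a ≤ t - τ by linarith) (by linarith)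

lemma exists_pos_eventually_mul_abs_delay_le (hx : IsCyclicSolution n lam τ f T x)
    (hn : 0 < n) (hτ : 0 < τ) (hlam : ∀ j < n, 0 ≤ lam j) {a : ℝ} (ha : T ≤ a)
    (hneg : ∀ j < n, ∀ t ∈ Ici a, x j t * f j (cyclicExtension n τ x (j + 1) t) < 0)
    (hlin : ∀ j < n, ∃ c > 0, ∀ᶠ t in atTop,
      c * |cyclicExtension n τ x (j + 1) t| ≤ |f j (cyclicExtension n τ x (j + 1) t)|) :
    ∃ K > 0, ∀ᶠ t in atTop, K * |x 0 (t - τ / 2)| ≤ |x 0 t| := by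
  set X := cyclicExtension n τ x
  choose! c hc hlin using hlin
  set h := τ / (2 * n)
  have hh : 0 < h := by positivity
  have hstep : ∀ j < n, ∀ᶠ t in atTop, h * c j * |X (j + 1) (t + h)| ≤ |X j t| := by
    intro j hj
    obtain ⟨b, hb⟩ := eventually_atTop.1 (hlin j hj)
    filter_upwards [eventually_ge_atTop (max b (a + τ))] with t ht
    have hbt : b ≤ t := le_of_max_le_left ht
    have hat : a + τ ≤ t := le_of_max_le_right ht
    rw [show X j = x j from cyclicExtension_of_lt hj, mul_assoc]
    refine mul_le_abs_of_mul_neg (hlam j hj) hh.le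
      ((hx.2.1 j hj).mono fun s hs => by simp only [mem_Ici] at hs ⊢; linarith [hs.1])
      (fun s hs => hx.hasDerivAt hj (by linarith [hs.1]))
      (fun s hs => hneg j hj s (by simp only [mem_Ici]; linarith [hs.1])) fun s hs => ?_
    calc c j * |X (j + 1) (t + h)| ≤ c j * |X (j + 1) s| :=
          mul_le_mul_of_nonneg_left (hx.antitoneOn_abs_cyclicExtension hn hτ.le hlam ha hneg hj
            (show a + τ ≤ s by linarith [hs.1]) (show a + τ ≤ t + h by linarith) hs.2.le)
            (hc j hj).le
      _ ≤ |f j (X (j + 1) s)| := hb s (by linarith [hs.1])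
  have hchain := eventually_prod_mul_le_of_shift (φ := fun k t => |X k t|)
    (fun j hj => mul_nonneg hh.le (hc j hj).le) hstep
  refine ⟨∏ j ∈ Finset.range n, h * c j,
    Finset.prod_pos fun j hj => mul_pos hh (hc j (Finset.mem_range.1 hj)), ?_⟩
  filter_upwards [hchain] with t ht
  have hdelay : t + n * h - τ = t - τ / 2 := by
    simp only [h]; field_simp; ring
  simpa [X, cyclicExtension, hn, hdelay] using ht

theorem exists_not_tendsto_mul_exp (hx : IsCyclicSolution n lam τ f T x) (hn : 0 < n)
    (hlam : ∀ j < n, 0 < lam j) (hτ : 0 < τ) (hf : ∀ j < n, Continuous (f j))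
    (hf0 : ∀ j < n, f j 0 = 0) (hfne : ∀ j < n, ∀ y ≠ 0, f j y ≠ 0)
    (hd : ∀ j < n, deriv (f j) 0 ≠ 0) (hnz : ∀ j < n, ∀ᶠ t in atTop, x j t ≠ 0) :
    ∃ μ > 0, ∃ j < n, ¬ Tendsto (fun t => x j t * exp (μ * t)) atTop (𝓝 0) := by
  by_contra! hsmall
  set X := cyclicExtension n τ x
  obtain ⟨b, hb⟩ := eventually_atTop.1 ((finite_lt_nat n).eventually_all.2 hnz)
  set a := max T b + τ
  have hTa : T ≤ a := by linarith [le_max_left T b]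
  have hXnz : ∀ k ≤ n, ∀ t ∈ Ici a, X k t ≠ 0 := fun k _ t ht =>
    cyclicExtension_ne_zero hn hτ.le (fun s hs => hb s (le_of_max_le_right hs)) ht
  by_cases hpos : ∃ j < n, ∀ t ∈ Ici a, 0 < x j t * f j (X (j + 1) t)
  · obtain ⟨j, hj, hpos⟩ := hpos
    exact not_tendsto_mul_exp_of_mul_pos ((hx.2.1 j hj).mono (Ici_subset_Ici.2 hTa))
      (fun s hs => hx.hasDerivAt hj (hTa.trans_lt hs)) hpos (hsmall (lam j) (hlam j hj) j hj)
  push Not at hpos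
  have hneg : ∀ j < n, ∀ t ∈ Ici a, x j t * f j (X (j + 1) t) < 0 := fun j hj =>
    (hx.forall_mul_pos_or_forall_mul_neg hf hfne hTa hXnz hj).resolve_left fun h =>
      let ⟨t, ht, hle⟩ := hpos j hj
      (h t ht).not_ge hle
  have hlin : ∀ j < n, ∃ c > 0, ∀ᶠ t in atTop, c * |X (j + 1) t| ≤ |f j (X (j + 1) t)| := by
    intro j hj
    have hX : Tendsto (X (j + 1)) atTop (𝓝 0) := tendsto_cyclicExtension hn
      (fun k hk => tendsto_zero_of_tendsto_mul_exp zero_le_one (hsmall 1 one_pos k hk)) hj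
    simpa [hf0 j hj] using (differentiableAt_of_deriv_ne_zero (hd j hj)).hasDerivAt
      |>.exists_pos_eventually_mul_abs_sub_le (hd j hj) hX
  obtain ⟨K, hK, hdelay⟩ := hx.exists_pos_eventually_mul_abs_delay_le hn hτ
    (fun j hj => (hlam j hj).le) hTa hneg hlin
  obtain ⟨μ, hμ, hμx⟩ := exists_not_tendsto_mul_exp_of_le_delay hK (half_pos hτ) (hnz 0 hn) hdelay
  exact hμx (hsmall μ hμ 0 hn)

end IsCyclicSolution

end CyclicSystem

theorem no_small_nonoscillating_solutions_general
    (n : ℕ) (hn : 0 < n) (lam : ℕ → ℝ) (hlam : ∀ j < n, 0 < lam j)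
    (τ : ℝ) (hτ : 0 < τ) (f : ℕ → ℝ → ℝ) (hf : ∀ j < n, Continuous (f j))
    (hpos : ∀ j < n - 1, ∀ y : ℝ, y ≠ 0 → 0 < y * f j y)
    (hneg : ∀ y : ℝ, y ≠ 0 → y * f (n - 1) y < 0)
    (hderiv0 : ∀ j < n, deriv (f j) 0 ≠ 0)
    (x : ℕ → ℝ → ℝ) (hx : IsCyclicSolution n lam τ f 0 x)
    (T : ℝ)
    (hnz : ∀ j < n, ∀ t : ℝ, T ≤ t → x j t ≠ 0) :
    ∃ μ : ℝ, 0 < μ ∧ ∃ j < n,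
      ¬ Filter.Tendsto (fun t : ℝ => x j t * Real.exp (μ * t))
          Filter.atTop (nhds 0) := by
  have hfeedback : ∀ j < n, f j 0 = 0 ∧ ∀ y ≠ 0, f j y ≠ 0 := by
    intro j hj
    rcases lt_or_ge j (n - 1) with hj' | hj'
    · exact ⟨map_zero_of_forall_mul_pos (hf j hj).continuousAt (hpos j hj'),
        fun y hy => right_ne_zero_of_mul (hpos j hj' y hy).ne'⟩
    · obtain rfl : j = n - 1 := by omega
      exact ⟨map_zero_of_forall_mul_neg (hf _ hj).continuousAt hneg,
        fun y hy => right_ne_zero_of_mul (hneg y hy).ne⟩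
  exact hx.exists_not_tendsto_mul_exp hn hlam hτ hf (fun j hj => (hfeedback j hj).1)
    (fun j hj => (hfeedback j hj).2) hderiv0 fun j hj => (eventually_ge_atTop T).mono (hnz j hj)

/-- Corollary 5: the cyclic system has no small non-oscillating solutions: if a
solution has all components eventually nonzero, then there is `μ > 0` such that
`x(t) e^{μ t}` does not converge to `0` (i.e. some component of `x(t) e^{μ t}`
does not converge to `0`). -/
theorem no_small_nonoscillating_solutions
    (n : ℕ) (hn : 0 < n) (lam : ℕ → ℝ) (hlam : ∀ j < n, 0 < lam j)
    (τ : ℝ) (hτ : 0 < τ) (f : ℕ → ℝ → ℝ) (hf : ∀ j < n, Continuous (f j))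
    (hpos : ∀ j < n - 1, ∀ y : ℝ, y ≠ 0 → 0 < y * f j y)
    (hneg : ∀ y : ℝ, y ≠ 0 → y * f (n - 1) y < 0)
    (hC1 : ∀ j < n, ContDiffAt ℝ 1 (f j) 0)
    (hderiv0 : ∀ j < n, deriv (f j) 0 ≠ 0)
    (x : ℕ → ℝ → ℝ) (hx : IsCyclicSolution n lam τ f 0 x)
    (T : ℝ) (hT : 0 ≤ T)
    (hnz : ∀ j < n, ∀ t : ℝ, T ≤ t → x j t ≠ 0) :
    ∃ μ : ℝ, 0 < μ ∧ ∃ j < n,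
      ¬ Filter.Tendsto (fun t : ℝ => x j t * Real.exp (μ * t))
          Filter.atTop (nhds 0) :=
  no_small_nonoscillating_solutions_general n hn lam hlam τ hτ f hf hpos hneg hderiv0 x hx T hnz
end
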